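/- arXiv:0709.4154 — 12 statements merged into one kernel-verified Lean document; each statement's English description precedes it below -/
import Mathlib

section
/- Let d ≥ 2 be an integer, c ∈ ℂ, φ(z) = z^d + c, and let α ∈ ℂ satisfy log|α| > (1/d)·max(log|c|, 0) + log 2. Then there exists a real number L such that log|φ^[k](α)| / d^k tends to L as k → ∞, and this L satisfies log(1 − 2^{−d})/(d − 1) ≤ L − log|α| ≤ log(1 + 2^{−d})/(d − 1). -/
/-!
On the region `B` where `2 ^ d * max ‖c‖ 1 < ‖z‖ ^ d`, which contains `α`, the constant is
small, `‖c‖ ≤ 2⁻¹ ^ d * ‖z‖ ^ d`, so the triangle inequality gives `log ‖φ z‖ = d * log ‖z‖ + O(1)`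
with the error between `log (1 - 2⁻¹ ^ d)` and `log (1 + 2⁻¹ ^ d)`; moreover `φ` maps `B` into
itself. Dividing by `d ^ (k + 1)`, the increments of `log ‖φ^[k] α‖ / d ^ k` are squeezed between
geometric terms, so the telescoping series converges and summing the geometric bounds gives the
estimate for `L - log ‖α‖`.
-/

open Filter Topology Real

theorem hasSum_inv_pow_succ {d : ℝ} (hd : 1 < d) :
    HasSum (fun k : ℕ => d⁻¹ ^ (k + 1)) (d - 1)⁻¹ := by
  have h := (hasSum_geometric_of_lt_one (by positivity) (inv_lt_one_of_one_lt₀ hd)).mul_left d⁻¹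
  have hd0 : d ≠ 0 := by positivity
  have hd1 : d - 1 ≠ 0 := by linarith
  have hsum : (d - 1)⁻¹ = d⁻¹ * (1 - d⁻¹)⁻¹ := by field_simp
  simpa only [hsum, ← pow_succ'] using h

theorem exists_tendsto_of_sub_succ_mem_Icc {u a b : ℕ → ℝ} {sa sb : ℝ}
    (ha : HasSum a sa) (hb : HasSum b sb) (hab : ∀ k, u (k + 1) - u k ∈ Set.Icc (a k) (b k)) :
    ∃ L, Tendsto u atTop (𝓝 L) ∧ u 0 + sa ≤ L ∧ L ≤ u 0 + sb := by
  set g := fun k => u (k + 1) - u k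
  have hg : Summable g := by
    have := (hb.summable.sub ha.summable).of_nonneg_of_le (fun k => sub_nonneg.2 (hab k).1)
      (fun k => sub_le_sub_right (hab k).2 _)
    simpa using this.add ha.summable
  refine ⟨u 0 + ∑' k, g k, ?_, ?_, ?_⟩
  · have := tendsto_const_nhds (x := u 0) |>.add hg.hasSum.tendsto_sum_nat
    refine this.congr fun k => ?_
    rw [Finset.sum_range_sub u k]; ring
  · linarith [hasSum_le (fun k => (hab k).1) ha hg.hasSum]
  · linarith [hasSum_le (fun k => (hab k).2) hg.hasSum hb]

theorem exists_tendsto_div_pow_of_affine_bounds {x : ℕ → ℝ} {d A B : ℝ} (hd : 1 < d)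
    (hx : ∀ k, x (k + 1) ∈ Set.Icc (d * x k + A) (d * x k + B)) :
    ∃ L, Tendsto (fun k => x k / d ^ k) atTop (𝓝 L) ∧
      A / (d - 1) ≤ L - x 0 ∧ L - x 0 ≤ B / (d - 1) := by
  have hsum := hasSum_inv_pow_succ hd
  obtain ⟨L, hL, hAL, hLB⟩ := exists_tendsto_of_sub_succ_mem_Icc (u := fun k => x k / d ^ k)
    (hsum.mul_left A) (hsum.mul_left B) fun k => by
      have hdk : (0 : ℝ) < d ^ (k + 1) := by positivity
      have hstep : x (k + 1) / d ^ (k + 1) - x k / d ^ k = (x (k + 1) - d * x k) / d ^ (k + 1) := by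
        field_simp; ring
      simp only [hstep, inv_pow, ← div_eq_mul_inv, Set.mem_Icc]
      exact ⟨div_le_div_of_nonneg_right (by linarith [(hx k).1]) hdk.le,
        div_le_div_of_nonneg_right (by linarith [(hx k).2]) hdk.le⟩
  simp only [pow_zero, div_one] at hAL hLB
  refine ⟨L, hL, ?_, ?_⟩ <;> rw [div_eq_mul_inv] <;> linarith

section EscapeRegion

variable {𝕜 : Type*} [NormedDivisionRing 𝕜]

theorem norm_pow_add_mem_Icc {z c : 𝕜} {n : ℕ} {ε : ℝ} (hc : ‖c‖ ≤ ε * ‖z‖ ^ n) :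
    ‖z ^ n + c‖ ∈ Set.Icc ((1 - ε) * ‖z‖ ^ n) ((1 + ε) * ‖z‖ ^ n) := by
  have hlow := norm_sub_le_norm_add (z ^ n) c
  have hup := norm_add_le (z ^ n) c
  rw [norm_pow] at hlow hup
  constructor <;> linarith

theorem log_norm_pow_add_mem_Icc {z c : 𝕜} {n : ℕ} {ε : ℝ} (hz : z ≠ 0) (hε : ε < 1)
    (hc : ‖c‖ ≤ ε * ‖z‖ ^ n) :
    log ‖z ^ n + c‖ ∈ Set.Icc (n * log ‖z‖ + log (1 - ε)) (n * log ‖z‖ + log (1 + ε)) := by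
  have hzn : 0 < ‖z‖ ^ n := by positivity
  have hε0 : 0 ≤ ε := nonneg_of_mul_nonneg_left ((norm_nonneg c).trans hc) hzn
  obtain ⟨hlow, hup⟩ := norm_pow_add_mem_Icc hc
  have hpos : 0 < ‖z ^ n + c‖ := lt_of_lt_of_le (by nlinarith) hlow
  rw [← log_pow, add_comm, add_comm (log (‖z‖ ^ n)), ← log_mul (by linarith) hzn.ne',
    ← log_mul (by linarith) hzn.ne']
  exact ⟨log_le_log (by nlinarith) hlow, log_le_log hpos hup⟩

/-- The region `B` of the paper, `‖z‖ > 2 * max ‖c‖ 1 ^ (1 / d)`, written without roots. -/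
def escapeRegion (d : ℕ) (c : 𝕜) : Set 𝕜 := {z | 2 ^ d * max ‖c‖ 1 < ‖z‖ ^ d}

theorem ne_zero_of_mem_escapeRegion {d : ℕ} {c z : 𝕜} (hz : z ∈ escapeRegion d c) : z ≠ 0 := by
  rintro rfl
  have h1 : (1 : ℝ) ≤ 2 ^ d * max ‖c‖ 1 :=
    one_le_mul_of_one_le_of_one_le (one_le_pow₀ one_le_two) (le_max_right _ _)
  have h2 : ‖(0 : 𝕜)‖ ^ d ≤ 1 := pow_le_one₀ (norm_nonneg _) (by simp)
  exact (hz.trans_le h2).not_ge h1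

theorem norm_le_of_mem_escapeRegion {d : ℕ} {c z : 𝕜} (hz : z ∈ escapeRegion d c) :
    ‖c‖ ≤ 2⁻¹ ^ d * ‖z‖ ^ d := by
  have h : 2 ^ d * ‖c‖ ≤ ‖z‖ ^ d :=
    (mul_le_mul_of_nonneg_left (le_max_left _ _) (by positivity)).trans hz.le
  rw [inv_pow, inv_mul_eq_div, le_div_iff₀ (by positivity)]
  linarith

theorem mapsTo_escapeRegion {d : ℕ} (hd : 2 ≤ d) (c : 𝕜) :
    Set.MapsTo (fun z => z ^ d + c) (escapeRegion d c) (escapeRegion d c) := by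
  intro z hz
  set m := max ‖c‖ 1
  have hm : 1 ≤ m := le_max_right _ _
  have h4 : (4 : ℝ) ≤ 2 ^ d := by
    calc (4 : ℝ) = 2 ^ 2 := by norm_num
      _ ≤ 2 ^ d := pow_le_pow_right₀ one_le_two hd
  have hε : (0 : ℝ) < 1 - 2⁻¹ ^ d := sub_pos.2 (pow_lt_one₀ (by norm_num) (by norm_num) (by omega))
  have h2m : 2 * m < ‖z ^ d + c‖ :=
    calc 2 * m ≤ (2 ^ d - 1) * m := by nlinarith
      _ = (1 - 2⁻¹ ^ d) * (2 ^ d * m) := by rw [inv_pow]; field_simp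
      _ < (1 - 2⁻¹ ^ d) * ‖z‖ ^ d := mul_lt_mul_of_pos_left hz hε
      _ ≤ ‖z ^ d + c‖ := (norm_pow_add_mem_Icc (norm_le_of_mem_escapeRegion hz)).1
  show 2 ^ d * m < ‖z ^ d + c‖ ^ d
  calc 2 ^ d * m ≤ 2 ^ d * m ^ d := by gcongr; exact le_self_pow₀ hm (by omega)
    _ = (2 * m) ^ d := (mul_pow _ _ _).symm
    _ < ‖z ^ d + c‖ ^ d := pow_lt_pow_left₀ h2m (by positivity) (by omega)

theorem mem_escapeRegion_of_log_norm_gt {d : ℕ} (hd : 0 < d) {c z : 𝕜}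
    (hz : log ‖z‖ > (1 / d) * max (log ‖c‖) 0 + log 2) : z ∈ escapeRegion d c := by
  set M := max (log ‖c‖) 0
  have hrhs : 0 < (1 / d : ℝ) * M + log 2 := by positivity
  have hz0 : 0 < ‖z‖ := one_pos.trans ((log_pos_iff (norm_nonneg z)).1 (hrhs.trans hz))
  have hmax : max ‖c‖ 1 ≤ exp M :=
    max_le ((le_exp_log _).trans (exp_le_exp.2 (le_max_left _ _)))
      (one_le_exp (le_max_right _ _))
  calc 2 ^ d * max ‖c‖ 1 ≤ exp (d * log 2) * exp M := by
        rw [exp_nat_mul, exp_log two_pos]; gcongr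
    _ = exp (d * ((1 / d) * M + log 2)) := by
        rw [← exp_add]; congr 1; field_simp; ring
    _ < exp (d * log ‖z‖) := by gcongr
    _ = ‖z‖ ^ d := by rw [exp_nat_mul, exp_log hz0]

end EscapeRegion

theorem local_canonical_height_exists_on_B (d : ℕ) (hd : 2 ≤ d) (c α : ℂ)
    (hα : Real.log (‖α‖) >
      (1 / d) * max (Real.log (‖c‖)) 0 + Real.log 2) :
    ∃ L : ℝ,
      Tendsto (fun k : ℕ =>
          Real.log (‖(fun z : ℂ => z ^ d + c)^[k] α‖) / (d : ℝ) ^ k)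
        atTop (nhds L) ∧
      Real.log (1 - (2 : ℝ)⁻¹ ^ d) / (d - 1) ≤ L - Real.log (‖α‖) ∧
      L - Real.log (‖α‖) ≤ Real.log (1 + (2 : ℝ)⁻¹ ^ d) / (d - 1) := by
  have horbit (k : ℕ) : (fun z : ℂ => z ^ d + c)^[k] α ∈ escapeRegion d c :=
    (mapsTo_escapeRegion hd c).iterate k (mem_escapeRegion_of_log_norm_gt (by omega) hα)
  have hε : (2 : ℝ)⁻¹ ^ d < 1 := pow_lt_one₀ (by norm_num) (by norm_num) (by omega)
  refine exists_tendsto_div_pow_of_affine_bounds (by exact_mod_cast hd) fun k => ?_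
  rw [Function.iterate_succ_apply']
  exact log_norm_pow_add_mem_Icc (ne_zero_of_mem_escapeRegion (horbit k)) hε
    (norm_le_of_mem_escapeRegion (horbit k))
end

section
/- Let d ≥ 2 be an integer, c ∈ ℂ, φ(z) = z^d + c, and let α ∈ ℂ satisfy log|α| > (1/d)·max(log|c|, 0) + log 2. Let L be the real number with log|φ^[k](α)| / d^k → L as k → ∞. Then for all natural numbers j > i ≥ 0 with φ^[j](α) ≠ φ^[i](α), one has (1/d)·max(log|c|, 0) + log|φ^[j](α) − φ^[i](α)| ≤ d^{j+1}·L + 2·log 2. -/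
/-! Write `M = max (log ‖c‖) 0` and `B = M / d + log 2`. Once `log ‖z‖ > B` we have `‖c‖ ≤ ‖z‖ ^ d / 2`,
so `log ‖z ^ d + c‖ ≥ d log ‖z‖ - log 2` and the region `log ‖z‖ > B` is forward invariant.
Along the orbit of `α` the sequence `(log ‖φ^[k] α‖ - log 2) / d ^ k` is therefore nondecreasing with
limit `L`, which gives `log ‖φ^[k] α‖ ≤ d ^ k L + log 2` and, at `k = 0`, `M / d < L`.
Then `log ‖φ^[j] α - φ^[i] α‖ ≤ log 2 + d ^ j L + log 2`, and `M / d + d ^ j L ≤ d ^ (j + 1) L`. -/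

open Filter Topology Real

theorem le_pow_mul_of_mul_le_succ {b : ℕ → ℝ} {r L : ℝ} (hr : 0 < r)
    (hb : ∀ k, r * b k ≤ b (k + 1))
    (hL : Tendsto (fun k => b k / r ^ k) atTop (𝓝 L)) (k : ℕ) :
    b k ≤ r ^ k * L := by
  have hmono : Monotone fun k => b k / r ^ k := by
    refine monotone_nat_of_le_succ fun k => ?_
    rw [div_le_div_iff₀ (pow_pos hr k) (pow_pos hr (k + 1)), pow_succ]
    nlinarith [mul_le_mul_of_nonneg_right (hb k) (pow_pos hr k).le]
  have := hmono.ge_of_tendsto hL k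
  rwa [div_le_iff₀ (pow_pos hr k), mul_comm] at this

theorem log_norm_sub_le_of_log_norm_le {E : Type*} [NormedAddCommGroup E] {x y : E} {R : ℝ}
    (hxy : x ≠ y) (hx : log ‖x‖ ≤ R) (hy : log ‖y‖ ≤ R) :
    log ‖x - y‖ ≤ log 2 + R := by
  have hx' : ‖x‖ ≤ exp R := (le_exp_log _).trans (exp_le_exp.mpr hx)
  have hy' : ‖y‖ ≤ exp R := (le_exp_log _).trans (exp_le_exp.mpr hy)
  calc log ‖x - y‖ ≤ log (2 * exp R) :=
        log_le_log (norm_pos_iff.mpr (sub_ne_zero.mpr hxy)) (by linarith [norm_sub_le x y])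
    _ = log 2 + R := by rw [log_mul two_ne_zero (exp_pos R).ne', log_exp]

section EscapeRegion

variable {𝕜 : Type*} [NormedDivisionRing 𝕜] {d : ℕ} {c z : 𝕜}

/-- `{z | escapeBound d c < log ‖z‖}` is the region `B` of the theorem's name. -/
noncomputable def escapeBound (d : ℕ) (c : 𝕜) : ℝ :=
  (1 / d) * max (log ‖c‖) 0 + log 2

theorem escapeBound_pos (d : ℕ) (c : 𝕜) : 0 < escapeBound d c := by
  unfold escapeBound
  have : 0 ≤ (1 / (d : ℝ)) * max (log ‖c‖) 0 := by positivity
  linarith [log_pos one_lt_two]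

theorem mul_escapeBound (hd : d ≠ 0) :
    d * escapeBound d c = max (log ‖c‖) 0 + d * log 2 := by
  unfold escapeBound
  rw [mul_add, ← mul_assoc, mul_one_div_cancel (Nat.cast_ne_zero.mpr hd), one_mul]

theorem norm_pos_of_escapeBound_lt (hz : escapeBound d c < log ‖z‖) : 0 < ‖z‖ := by
  refine (norm_nonneg z).lt_of_ne fun h => ?_
  rw [← h, log_zero] at hz
  exact (escapeBound_pos d c).not_gt hz

theorem two_mul_norm_le_norm_pow (hd : 1 ≤ d) (hz : escapeBound d c < log ‖z‖) :
    2 * ‖c‖ ≤ ‖z‖ ^ d := by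
  have hz0 := norm_pos_of_escapeBound_lt hz
  rcases eq_or_ne c 0 with rfl | hc
  · simp only [norm_zero, mul_zero]; positivity
  refine (log_le_log_iff (by positivity) (by positivity)).mp ?_
  calc log (2 * ‖c‖) = log ‖c‖ + log 2 := by
        rw [log_mul two_ne_zero (norm_ne_zero_iff.mpr hc), add_comm]
    _ ≤ max (log ‖c‖) 0 + log 2 := by gcongr; exact le_max_left _ _
    _ ≤ max (log ‖c‖) 0 + d * log 2 := by
      gcongr; exact le_mul_of_one_le_left (log_pos one_lt_two).le (by exact_mod_cast hd)
    _ = d * escapeBound d c := (mul_escapeBound (by omega)).symm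
    _ ≤ d * log ‖z‖ := by gcongr
    _ = log (‖z‖ ^ d) := (Real.log_pow ‖z‖ d).symm

theorem mul_log_norm_sub_log_two_le (hd : 1 ≤ d) (hz : escapeBound d c < log ‖z‖) :
    d * log ‖z‖ - log 2 ≤ log ‖z ^ d + c‖ := by
  have hz0 := norm_pos_of_escapeBound_lt hz
  have hc := two_mul_norm_le_norm_pow hd hz
  have hhalf : ‖z‖ ^ d / 2 ≤ ‖z ^ d + c‖ := by
    have := norm_sub_le (z ^ d + c) c
    rw [add_sub_cancel_right, norm_pow] at this
    linarith
  calc d * log ‖z‖ - log 2 = log (‖z‖ ^ d / 2) := by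
        rw [log_div (by positivity) two_ne_zero, Real.log_pow]
    _ ≤ log ‖z ^ d + c‖ := log_le_log (by positivity) hhalf

theorem escapeBound_lt_log_norm_pow_add (hd : 2 ≤ d) (hz : escapeBound d c < log ‖z‖) :
    escapeBound d c < log ‖z ^ d + c‖ := by
  have hd' : (2 : ℝ) ≤ d := by exact_mod_cast hd
  have hB := mul_escapeBound (c := c) (by omega : d ≠ 0)
  have hstep := mul_log_norm_sub_log_two_le (by omega) hz
  have hM : escapeBound d c ≤ max (log ‖c‖) 0 + log 2 := by
    unfold escapeBound
    have := le_max_right (log ‖c‖) 0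
    have : 1 / (d : ℝ) ≤ 1 := by rw [div_le_one (by positivity)]; linarith
    nlinarith
  have hdz : d * escapeBound d c < d * log ‖z‖ := mul_lt_mul_of_pos_left hz (by positivity)
  have hlog2 : 2 * log 2 ≤ d * log 2 := by gcongr
  linarith

theorem escapeBound_lt_log_norm_iterate (hd : 2 ≤ d) {α : 𝕜} (hα : escapeBound d c < log ‖α‖)
    (k : ℕ) : escapeBound d c < log ‖(fun z : 𝕜 => z ^ d + c)^[k] α‖ := by
  induction k with
  | zero => exact hα
  | succ k ih =>
    rw [Function.iterate_succ_apply']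
    exact escapeBound_lt_log_norm_pow_add hd ih

theorem log_norm_iterate_le (hd : 2 ≤ d) {α : 𝕜} (hα : escapeBound d c < log ‖α‖) {L : ℝ}
    (hL : Tendsto (fun k : ℕ => log ‖(fun z : 𝕜 => z ^ d + c)^[k] α‖ / (d : ℝ) ^ k)
      atTop (𝓝 L)) (k : ℕ) :
    log ‖(fun z : 𝕜 => z ^ d + c)^[k] α‖ ≤ (d : ℝ) ^ k * L + log 2 := by
  have hd' : (2 : ℝ) ≤ d := by exact_mod_cast hd
  set a := fun k : ℕ => log ‖(fun z : 𝕜 => z ^ d + c)^[k] α‖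
  have hstep (k : ℕ) : (d : ℝ) * (a k - log 2) ≤ a (k + 1) - log 2 := by
    have := mul_log_norm_sub_log_two_le (by omega) (escapeBound_lt_log_norm_iterate hd hα k)
    simp only [a, Function.iterate_succ_apply']
    nlinarith [log_pos one_lt_two]
  have hlim : Tendsto (fun k => (a k - log 2) / (d : ℝ) ^ k) atTop (𝓝 L) := by
    have hvanish : Tendsto (fun k : ℕ => log 2 / (d : ℝ) ^ k) atTop (𝓝 0) :=
      tendsto_const_nhds.div_atTop (tendsto_pow_atTop_atTop_of_one_lt (by linarith))
    simpa only [sub_div, sub_zero] using hL.sub hvanish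
  linarith [le_pow_mul_of_mul_le_succ (by positivity) hstep hlim k]

end EscapeRegion

theorem iterate_gap_bound_on_B (d : ℕ) (hd : 2 ≤ d) (c α : ℂ)
    (hα : Real.log (norm α) >
      (1 / d) * max (Real.log (norm c)) 0 + Real.log 2)
    (L : ℝ)
    (hL : Tendsto (fun k : ℕ =>
        Real.log (norm ((fun z : ℂ => z ^ d + c)^[k] α)) / (d : ℝ) ^ k)
      atTop (nhds L)) :
    ∀ i j : ℕ, i < j →
      (fun z : ℂ => z ^ d + c)^[j] α ≠ (fun z : ℂ => z ^ d + c)^[i] α →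
      (1 / d) * max (Real.log (norm c)) 0 +
          Real.log (norm ((fun z : ℂ => z ^ d + c)^[j] α -
            (fun z : ℂ => z ^ d + c)^[i] α)) ≤
        (d : ℝ) ^ (j + 1) * L + 2 * Real.log 2 := by
  intro i j hij hne
  have hd' : (2 : ℝ) ≤ d := by exact_mod_cast hd
  have hbound := log_norm_iterate_le hd hα hL
  have hML : (1 / (d : ℝ)) * max (Real.log ‖c‖) 0 < L := by
    have := hbound 0
    simp only [pow_zero, one_mul, Function.iterate_zero_apply] at this
    linarith
  have hL0 : 0 ≤ L := le_trans (by positivity) hML.le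
  have hpow : (d : ℝ) ^ i ≤ (d : ℝ) ^ j := pow_le_pow_right₀ (by linarith) hij.le
  have hgap := log_norm_sub_le_of_log_norm_le hne (hbound j)
    ((hbound i).trans (by gcongr))
  have hgrowth : L ≤ (d : ℝ) ^ j * ((d : ℝ) - 1) * L :=
    le_mul_of_one_le_left hL0 (one_le_mul_of_one_le_of_one_le (one_le_pow₀ (by linarith)) (by linarith))
  rw [pow_succ]
  linarith
end

section
/- Let K be a field with a nonarchimedean multiplicative absolute value v, let d ≥ 2 be an integer, c ∈ K, and φ(z) = z^d + c. Suppose α ∈ K satisfies v(α)^d > max(v(c), 1). Then for every k ≥ 0, v(φ^[k](α)) = v(α)^{d^k} (in particular the local canonical height of α equals log v(α)), and for all natural numbers j > i ≥ 0, (1/d)·max(log v(c), 0) + log v(φ^[j](α) − φ^[i](α)) ≤ d^{j+1}·log v(α). -/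
theorem nonarch_orbit_in_Bv {K : Type*} [Field K] (v : AbsoluteValue K ℝ)
    (hna : ∀ x y : K, v (x + y) ≤ max (v x) (v y))
    (d : ℕ) (hd : 2 ≤ d) (c : K)
    (α : K) (hα : v α ^ d > max (v c) 1) :
    (∀ k : ℕ, v ((fun z : K => z ^ d + c)^[k] α) = v α ^ d ^ k) ∧
    ∀ i j : ℕ, i < j →
      (1 / d) * max (Real.log (v c)) 0 +
          Real.log (v ((fun z : K => z ^ d + c)^[j] α - (fun z : K => z ^ d + c)^[i] α)) ≤
        (d : ℝ) ^ (j + 1) * Real.log (v α) := by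
  have hd0 : 0 < d := by omega
  have ha1 : 1 < v α := by
    by_contra h
    push_neg at h
    have h1 : v α ^ d ≤ 1 := pow_le_one₀ (v.nonneg α) h
    have h2 : (1:ℝ) < v α ^ d := lt_of_le_of_lt (le_max_right (v c) 1) hα
    linarith
  have hadd : ∀ x : K, v c < v x → v (x + c) = v x := by
    intro x hx
    apply le_antisymm
    · exact le_trans (hna x c) (max_le le_rfl hx.le)
    · have h2 : v x ≤ max (v (x + c)) (v c) := by
        have := hna (x + c) (-c)
        simpa using this
      rcases max_cases (v (x + c)) (v c) with ⟨he, _⟩ | ⟨he, _⟩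
      · rw [he] at h2; exact h2
      · rw [he] at h2; exact absurd h2 (not_le.mpr hx)
  have horbit : ∀ k : ℕ, v ((fun z : K => z ^ d + c)^[k] α) = v α ^ d ^ k := by
    intro k
    induction k with
    | zero => simp
    | succ k ih =>
      rw [Function.iterate_succ_apply']
      have hgt : v c < v (((fun z : K => z ^ d + c)^[k] α) ^ d) := by
        rw [map_pow, ih, ← pow_mul]
        calc v c ≤ max (v c) 1 := le_max_left _ _
          _ < v α ^ d := hα
          _ ≤ v α ^ (d ^ k * d) := by
              apply pow_le_pow_right₀ ha1.le
              have : 1 ≤ d ^ k := Nat.one_le_pow _ _ hd0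
              nlinarith
      have := hadd _ hgt
      show v (((fun z : K => z ^ d + c)^[k] α) ^ d + c) = _
      rw [this, map_pow, ih, ← pow_mul, ← pow_succ]
  refine ⟨horbit, ?_⟩
  intro i j hij
  have hla : 0 < Real.log (v α) := Real.log_pos ha1
  set x := (fun z : K => z ^ d + c)^[j] α
  set y := (fun z : K => z ^ d + c)^[i] α
  have hdiffle : v (x - y) ≤ v α ^ d ^ j := by
    have h := hna x (-y)
    have h2 : v (x - y) ≤ max (v x) (v y) := by simpa [sub_eq_add_neg] using h
    rw [horbit j, horbit i] at h2
    refine h2.trans (max_le le_rfl ?_)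
    exact pow_le_pow_right₀ ha1.le (Nat.pow_le_pow_right hd0 hij.le)
  have hL : Real.log (v (x - y)) ≤ (d:ℝ) ^ j * Real.log (v α) := by
    rcases eq_or_lt_of_le (v.nonneg (x - y)) with h0 | h0
    · rw [← h0, Real.log_zero]; positivity
    · calc Real.log (v (x - y)) ≤ Real.log (v α ^ d ^ j) := Real.log_le_log h0 hdiffle
        _ = (d ^ j : ℕ) * Real.log (v α) := Real.log_pow _ _
        _ = (d:ℝ) ^ j * Real.log (v α) := by push_cast; ring
  have hM : max (Real.log (v c)) 0 ≤ (d:ℝ) * Real.log (v α) := by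
    have h1 : Real.log (max (v c) 1) ≤ Real.log (v α ^ d) :=
      Real.log_le_log (by positivity) hα.le
    rw [Real.log_pow] at h1
    rcases le_total (v c) 1 with h | h
    · rw [max_eq_right (Real.log_nonpos (v.nonneg c) h)]
      positivity
    · rw [max_eq_left (Real.log_nonneg h)]
      rw [max_eq_left h] at h1
      exact_mod_cast h1
  have hD : (2:ℝ) ≤ (d:ℝ) := by exact_mod_cast hd
  have hDj : (1:ℝ) ≤ (d:ℝ) ^ j := one_le_pow₀ (by linarith)
  have hM0 : 0 ≤ max (Real.log (v c)) 0 := le_max_right _ _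
  have hstep : (1 / (d:ℝ)) * max (Real.log (v c)) 0 ≤ Real.log (v α) := by
    rw [div_mul_eq_mul_div, div_le_iff₀ (by linarith : (0:ℝ) < (d:ℝ))]
    nlinarith
  have hpow : (d:ℝ) ^ (j + 1) = (d:ℝ) * (d:ℝ) ^ j := by ring
  rw [hpow]
  nlinarith [mul_le_mul_of_nonneg_left hla.le (by linarith : (0:ℝ) ≤ (d:ℝ) ^ j)]
end

section
/- Let K be a field with a nonarchimedean multiplicative absolute value v, let d ≥ 2 be an integer, c ∈ K, and φ(z) = z^d + c. If α ∈ K satisfies max(log v(α), 0) ≠ (1/d)·max(log v(c), 0), then v(φ(α))^d > max(v(c), 1). -/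
theorem not_in_Rv_implies_image_in_Bv {K : Type*} [Field K] (v : AbsoluteValue K ℝ)
    (hna : ∀ x y : K, v (x + y) ≤ max (v x) (v y))
    (d : ℕ) (hd : 2 ≤ d) (c : K) (α : K)
    (hα : max (Real.log (v α)) 0 ≠ (1 / d) * max (Real.log (v c)) 0) :
    v (α ^ d + c) ^ d > max (v c) 1 := by
  have hd0 : d ≠ 0 := by omega
  have hdR : (d : ℝ) ≠ 0 := by positivity
  set A := v α with hAdef
  set C := v c with hCdef
  have hA0 : 0 ≤ A := v.nonneg α
  have hC0 : 0 ≤ C := v.nonneg c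
  -- ultrametric equality lemma
  have key : ∀ x y : K, v x < v y → v (x + y) = v y := by
    intro x y h
    refine le_antisymm ((hna x y).trans (max_le h.le le_rfl)) ?_
    have hxy : (x + y) + (-x) = y := by ring
    have h2 : v y ≤ max (v (x + y)) (v x) := by
      calc v y = v ((x + y) + (-x)) := by rw [hxy]
        _ ≤ max (v (x + y)) (v (-x)) := hna _ _
        _ = max (v (x + y)) (v x) := by rw [v.map_neg]
    rcases le_or_gt (v x) (v (x + y)) with hle | hlt
    · exact h2.trans (max_le le_rfl hle)
    · have : v y ≤ v x := h2.trans (max_le hlt.le le_rfl)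
      exact absurd (this.trans_lt h) (lt_irrefl _)
  -- translate hypothesis
  have hlogA : Real.log (max A 1) = max (Real.log A) 0 := by
    rcases le_or_gt A 1 with h | h
    · rw [max_eq_right h, Real.log_one]
      rcases eq_or_lt_of_le hA0 with h0 | h0
      · simp [← h0, Real.log_zero]
      · rw [max_eq_right (Real.log_nonpos h0.le h)]
    · rw [max_eq_left h.le, max_eq_left (Real.log_nonneg h.le)]
  have hlogC : Real.log (max C 1) = max (Real.log C) 0 := by
    rcases le_or_gt C 1 with h | h
    · rw [max_eq_right h, Real.log_one]
      rcases eq_or_lt_of_le hC0 with h0 | h0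
      · simp [← h0, Real.log_zero]
      · rw [max_eq_right (Real.log_nonpos h0.le h)]
    · rw [max_eq_left h.le, max_eq_left (Real.log_nonneg h.le)]
  have hne : (max A 1) ^ d ≠ max C 1 := by
    intro h
    apply hα
    have hlog := congrArg Real.log h
    rw [Real.log_pow, hlogA, hlogC] at hlog
    rw [← hlog]
    field_simp
  have hvpow : v (α ^ d) = A ^ d := v.map_pow α d
  rcases lt_trichotomy (A ^ d) (max C 1) with hlt | heq | hgt
  · -- A^d < max C 1; necessarily C > 1
    have hC1 : 1 < C := by
      by_contra hC1
      push_neg at hC1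
      have hmax : max C 1 = 1 := max_eq_right hC1
      rw [hmax] at hlt
      have hA1 : A < 1 := by
        by_contra hA1
        push_neg at hA1
        exact absurd (one_le_pow₀ hA1) (not_le.mpr hlt)
      exact hne (by rw [max_eq_right hA1.le, one_pow, hmax])
    have hmax : max C 1 = C := max_eq_left hC1.le
    rw [hmax] at hlt
    have hv : v (α ^ d + c) = C := by
      have := key (α ^ d) c (by rw [hvpow]; exact hlt)
      exact this
    rw [hv, hmax]
    calc C = C ^ 1 := (pow_one C).symm
      _ < C ^ d := pow_lt_pow_right₀ hC1 (by omega)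
  · -- A^d = max C 1: contradiction
    exfalso
    rcases le_or_gt 1 A with hA1 | hA1
    · exact hne (by rw [max_eq_left hA1, heq])
    · have h1 : A ^ d < 1 := pow_lt_one₀ hA0 hA1 hd0
      have h2 : (1 : ℝ) ≤ max C 1 := le_max_right _ _
      rw [heq] at h1
      linarith
  · -- A^d > max C 1
    have hC : C < A ^ d := (le_max_left C 1).trans_lt hgt
    have h1 : (1 : ℝ) < A ^ d := (le_max_right C 1).trans_lt hgt
    have hv : v (α ^ d + c) = A ^ d := by
      rw [show α ^ d + c = c + α ^ d from add_comm _ _]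
      rw [key c (α ^ d) (by rw [hvpow]; exact hC), hvpow]
    rw [hv]
    calc max C 1 < A ^ d := hgt
      _ = (A ^ d) ^ 1 := (pow_one _).symm
      _ ≤ (A ^ d) ^ d := pow_le_pow_right₀ h1.le (by omega)
end

section
/- Let d ≥ 2 be an integer, c ∈ ℚ with c ≠ 0, and φ(z) = z^d + c. If α ∈ ℚ is preperiodic for φ, i.e. φ^[i](α) = φ^[j](α) for some natural numbers i ≠ j, then for every prime p one has d · max(−v_p(α), 0) = max(−v_p(c), 0), where v_p denotes the p-adic valuation on ℚ. -/
/-!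
Write `v = v_p`. If `d · v(β) < min (v(c), 0)`, the term `β ^ d` dominates `c` in `β ^ d + c`, so
`v(φ β) = d · v(β)` and `φ β` again satisfies the inequality: the valuations `dⁿ · v(β)` along the
orbit of `β` are pairwise distinct, and `β` cannot be preperiodic. If the local heights of `α` and
`c` do not match, then either `α` satisfies this inequality, or `c` dominates in `φ α = α ^ d + c`
and `φ α` satisfies it, since `v(φ α) = v(c) < 0`.
-/

open Function

lemma Function.injective_iterate_apply_of_injective_iterate_apply_map {X : Type*} {f : X → X}
    {x : X} (h : Injective fun n => f^[n] (f x)) : Injective fun n => f^[n] x := by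
  intro i j hij
  apply h
  simp only [← iterate_succ_apply, iterate_succ_apply', hij]

namespace padicValRat

variable {p : ℕ} [Fact p.Prime]

lemma add_eq_of_lt_of_ne_zero {q r : ℚ} (hq : q ≠ 0)
    (hval : padicValRat p q < padicValRat p r) : padicValRat p (q + r) = padicValRat p q := by
  rcases eq_or_ne r 0 with rfl | hr
  · rw [add_zero]
  have hqr : q + r ≠ 0 := by
    intro h
    rw [eq_neg_of_add_eq_zero_right h, padicValRat.neg] at hval
    exact hval.false
  exact add_eq_of_lt hqr hq hr hval

variable {d : ℕ} {c β : ℚ}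

lemma pow_add_eq_of_lt (hβ : β ≠ 0) (h : d * padicValRat p β < padicValRat p c) :
    padicValRat p (β ^ d + c) = d * padicValRat p β := by
  rw [add_eq_of_lt_of_ne_zero (pow_ne_zero d hβ) (by rwa [padicValRat.pow]), padicValRat.pow]

lemma pow_add_eq_of_gt (hd : d ≠ 0) (hc : c ≠ 0) (h : padicValRat p c < d * padicValRat p β) :
    padicValRat p (β ^ d + c) = padicValRat p c := by
  rcases eq_or_ne β 0 with rfl | hβ
  · rw [zero_pow hd, zero_add]
  rw [add_comm, add_eq_of_lt_of_ne_zero hc (by rwa [padicValRat.pow])]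

end padicValRat

/-- `β` lies in the `p`-adic escape region of `z ↦ z ^ d + c`, i.e.
`|β|_p > max (|c|_p ^ (1/d), 1)`. -/
def PadicEscapes (p d : ℕ) (c β : ℚ) : Prop :=
  d * padicValRat p β < min (padicValRat p c) 0

namespace PadicEscapes

variable {p d : ℕ} [Fact p.Prime] {c β : ℚ}

lemma padicValRat_iterate (h : PadicEscapes p d c β) (n : ℕ) :
    padicValRat p ((fun z : ℚ => z ^ d + c)^[n] β) = (d : ℤ) ^ n * padicValRat p β := by
  unfold PadicEscapes at h
  have hβ : padicValRat p β < 0 := by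
    by_contra! hβ
    have : 0 ≤ (d : ℤ) * padicValRat p β := mul_nonneg d.cast_nonneg hβ
    omega
  have hd : (1 : ℤ) ≤ d := by
    by_contra! hd
    have : (d : ℤ) = 0 := by omega
    simp only [this, zero_mul] at h
    omega
  induction n with
  | zero => simp
  | succ n ih =>
    have hle : (d : ℤ) ^ n * padicValRat p β ≤ padicValRat p β := by
      nlinarith [one_le_pow₀ (n := n) hd]
    have hne : (fun z : ℚ => z ^ d + c)^[n] β ≠ 0 := by
      intro h0
      rw [h0, padicValRat.zero] at ih
      omega
    have hlt : (d : ℤ) * padicValRat p ((fun z : ℚ => z ^ d + c)^[n] β) < padicValRat p c := by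
      rw [ih]
      nlinarith [min_le_left (padicValRat p c) 0]
    rw [iterate_succ_apply', padicValRat.pow_add_eq_of_lt hne hlt, ih, pow_succ']
    ring

lemma injective_iterate (hd : 2 ≤ d) (h : PadicEscapes p d c β) :
    Injective fun n => (fun z : ℚ => z ^ d + c)^[n] β := by
  have hβ : padicValRat p β ≠ 0 := by
    intro h0
    simp [PadicEscapes, h0] at h
  intro i j hij
  have hval := congrArg (padicValRat p) hij
  simp only [h.padicValRat_iterate, mul_left_inj' hβ] at hval
  exact Nat.pow_right_injective hd (by exact_mod_cast hval)

end PadicEscapes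

lemma padicEscapes_or_padicEscapes_map {p d : ℕ} [Fact p.Prime] {c α : ℚ} (hd : 2 ≤ d)
    (hc : c ≠ 0) (h : (d : ℤ) * max (-padicValRat p α) 0 ≠ max (-padicValRat p c) 0) :
    PadicEscapes p d c α ∨ PadicEscapes p d c (α ^ d + c) := by
  unfold PadicEscapes
  by_cases hc_dom : padicValRat p c < min (d * padicValRat p α) 0
  · right
    have hcneg : padicValRat p c < 0 := hc_dom.trans_le (min_le_right _ _)
    rw [padicValRat.pow_add_eq_of_gt (by omega) hc (hc_dom.trans_le (min_le_left _ _))]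
    exact lt_min (by nlinarith) (by nlinarith)
  · left
    rw [mul_max_of_nonneg _ _ d.cast_nonneg, mul_zero, mul_neg] at h
    generalize (d : ℤ) * padicValRat p α = x at *
    omega

theorem preperiodic_local_height_condition (d : ℕ) (hd : 2 ≤ d) (c : ℚ) (hc : c ≠ 0)
    (α : ℚ) (hpre : ∃ i j : ℕ, i ≠ j ∧
      (fun z : ℚ => z ^ d + c)^[i] α = (fun z : ℚ => z ^ d + c)^[j] α) :
    ∀ p : ℕ, p.Prime →
      (d : ℤ) * max (-padicValRat p α) 0 = max (-padicValRat p c) 0 := by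
  intro p hp
  have : Fact p.Prime := ⟨hp⟩
  obtain ⟨i, j, hij, horbit⟩ := hpre
  by_contra h
  refine hij ?_
  rcases padicEscapes_or_padicEscapes_map hd hc h with hα | hφα
  · exact hα.injective_iterate hd horbit
  · exact injective_iterate_apply_of_injective_iterate_apply_map (hφα.injective_iterate hd) horbit
end

section
/- Let d ≥ 2 be an integer, c ∈ ℚ, and φ(z) = z^d + c. Suppose there exists a prime p with v_p(c) < 0 and d ∤ v_p(c) (a Type I prime for φ). Then φ has no preperiodic points in ℚ: for every α ∈ ℚ and all natural numbers i ≠ j, φ^[i](α) ≠ φ^[j](α). -/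
/-!
Let `|·|` be the `p`-adic norm. Since `d ∤ v_p(c)`, `|x|^d` and `|c|` are distinct powers of `p`,
so `|φ(x)| = max(|x|^d, |c|) ≥ |c| > 1` for every `x`. Hence `|φ(φ(x))| ≥ |φ(x)|^d > |φ(x)|`:
from the first iterate on, the norms of an orbit strictly increase, and no two iterates coincide.
-/

theorem Function.injective_iterate_of_lt_apply_apply {α β : Type*} [Preorder β] {f : α → α}
    (g : α → β) (h : ∀ x, g (f x) < g (f (f x))) (x : α) : Injective fun n => f^[n] x := by
  have hcomm (n : ℕ) : f^[n] (f x) = f (f^[n] x) := (Commute.iterate_self f n).eq x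
  have hmono : StrictMono fun n => g (f^[n] (f x)) := by
    refine strictMono_nat_of_lt_succ fun n => ?_
    simp only [hcomm, iterate_succ_apply']
    exact h _
  exact fun i j heq => hmono.injective (by simp only [hcomm, heq])

namespace padicNorm

variable {p : ℕ} [Fact p.Prime]

theorem one_lt_of_padicValRat_neg {c : ℚ} (hc : padicValRat p c < 0) : 1 < padicNorm p c := by
  have hc0 : c ≠ 0 := by rintro rfl; simp at hc
  rw [padicNorm.eq_zpow_of_nonzero hc0]
  exact one_lt_zpow₀ (mod_cast (Fact.out : p.Prime).one_lt) (neg_pos.mpr hc)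

theorem pow_ne_of_not_dvd_padicValRat {c : ℚ} (hc : c ≠ 0) {d : ℕ}
    (hd : ¬(d : ℤ) ∣ padicValRat p c) (x : ℚ) : padicNorm p x ^ d ≠ padicNorm p c := by
  rw [← IsAbsoluteValue.abv_pow (padicNorm p)]
  rcases eq_or_ne (x ^ d) 0 with hx | hx
  · simpa [hx] using (padicNorm.nonzero hc).symm
  have hp : (1 : ℚ) < p := mod_cast (Fact.out : p.Prime).one_lt
  rw [padicNorm.eq_zpow_of_nonzero hx, padicNorm.eq_zpow_of_nonzero hc,
    (zpow_right_injective₀ (by positivity) hp.ne').ne_iff, neg_inj.ne, padicValRat.pow x]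
  exact fun h => hd ⟨_, h.symm⟩

theorem pow_add_eq_max_of_not_dvd_padicValRat {c : ℚ} (hc : c ≠ 0) {d : ℕ}
    (hd : ¬(d : ℤ) ∣ padicValRat p c) (x : ℚ) :
    padicNorm p (x ^ d + c) = max (padicNorm p x ^ d) (padicNorm p c) := by
  have hne := pow_ne_of_not_dvd_padicValRat hc hd x
  rw [← IsAbsoluteValue.abv_pow (padicNorm p)] at hne ⊢
  exact add_eq_max_of_ne hne

end padicNorm

theorem typeI_prime_implies_no_preperiodic (d : ℕ) (hd : 2 ≤ d) (c : ℚ)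
    (p : ℕ) (hp : p.Prime) (hneg : padicValRat p c < 0)
    (hnd : ¬ (d : ℤ) ∣ padicValRat p c) :
    ∀ α : ℚ, ∀ i j : ℕ, i ≠ j →
      (fun z : ℚ => z ^ d + c)^[i] α ≠ (fun z : ℚ => z ^ d + c)^[j] α := by
  have := Fact.mk hp
  have hc : c ≠ 0 := by rintro rfl; simp at hneg
  have hnorm := padicNorm.pow_add_eq_max_of_not_dvd_padicValRat hc hnd
  intro α i j hij
  refine (Function.injective_iterate_of_lt_apply_apply (padicNorm p) (fun x => ?_) α).ne hij
  have hgt : 1 < padicNorm p (x ^ d + c) :=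
    (padicNorm.one_lt_of_padicValRat_neg hneg).trans_le (by rw [hnorm]; exact le_max_right _ _)
  calc padicNorm p (x ^ d + c) < padicNorm p (x ^ d + c) ^ d := lt_self_pow₀ hgt hd
    _ ≤ padicNorm p ((x ^ d + c) ^ d + c) := by rw [hnorm (x ^ d + c)]; exact le_max_left _ _
end

section
/- Let K be an algebraically closed field of characteristic zero equipped with a nonarchimedean multiplicative absolute value v, let d ≥ 2 be an integer, c ∈ K with v(c) > 1, and φ(z) = z^d + c. Set m = 2 if d = 2 and m = 1 otherwise. If α ∈ K satisfies v(φ^[m](α))^d = v(c), then there exists β ∈ K with φ^[m](β) = 0 and log v(α − β) ≤ −(1/d)·log v(c) − log v(d·1_K) − log v(2·1_K). -/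
/-!
Put `r = v(c)^(1/d)` and let `P = φ^[m]`, a monic polynomial of degree `d^m`. If `β` is the
root of `P` nearest to `α`, the ultrametric inequality gives `v(β - ρ) ≤ v(α - ρ)` for every root
`ρ`, hence `v(α - β) · v(P'(β)) ≤ v(P(α)) = r`. Running backwards along the orbit of `β`, each
`φ^[i+1] β` is smaller than `c`, which forces `v(φ^[i] β) = r` for `i < m`; by the chain rule
`v(P'(β)) = (v(d) r^(d-1))^m`. For `(d, m) = (2, 2)`, and for `d ≥ 3, m = 1` using `v(2) ≤ 1`,
this gives `v(α - β) ≤ 1 / (r v(d) v(2))`.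
-/

open Polynomial

theorem Polynomial.eval_derivative_iterate_comp_X {R : Type*} [CommRing R] (p : R[X]) (k : ℕ)
    (t : R) : (p.comp^[k] X).derivative.eval t =
      ∏ i ∈ Finset.range k, p.derivative.eval ((fun x => p.eval x)^[i] t) := by
  induction k with
  | zero => simp
  | succ k ih =>
    rw [Function.iterate_succ_apply', derivative_comp, eval_mul, ih, eval_comp,
      iterate_comp_eval, eval_X, Finset.prod_range_succ]

theorem Polynomial.Monic.iterate_comp_X {R : Type*} [CommRing R] [IsDomain R] {p : R[X]}
    (hp : p.Monic) (hdeg : p.natDegree ≠ 0) (k : ℕ) : (p.comp^[k] X).Monic := by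
  induction k with
  | zero => exact monic_X
  | succ k ih =>
    rw [Function.iterate_succ_apply']
    exact hp.comp ih (by simp [natDegree_iterate_comp, hdeg])

section
variable {K : Type*} [Field K] {v : AbsoluteValue K ℝ} {d : ℕ} {c : K} {r : ℝ}

theorem IsNonarchimedean.exists_root_abv_sub_mul_abv_derivative_le (hv : IsNonarchimedean v)
    {P : K[X]} (hsplit : P.Splits) (hmonic : P.Monic) (hdeg : 0 < P.natDegree) (α : K) :
    ∃ β, P.IsRoot β ∧ v (α - β) * v (P.derivative.eval β) ≤ v (P.eval α) := by
  classical
  have hroots : P.roots.toFinset.Nonempty := by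
    rw [Multiset.toFinset_nonempty, ← Multiset.card_pos, splits_iff_card_roots.mp hsplit]
    exact hdeg
  obtain ⟨β, hβ, hclosest⟩ := P.roots.toFinset.exists_min_image (fun r => v (α - r)) hroots
  rw [Multiset.mem_toFinset] at hβ
  refine ⟨β, isRoot_of_mem_roots hβ, ?_⟩
  have hP := hsplit.eq_prod_roots_of_monic hmonic
  have hderiv : P.derivative.eval β = ((P.roots.erase β).map (β - ·)).prod := by
    conv_lhs => rw [hP]
    exact eval_multiset_prod_X_sub_C_derivative hβ
  have heval : P.eval α = (α - β) * ((P.roots.erase β).map (α - ·)).prod := by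
    conv_lhs => rw [hP, eval_multiset_prod, Multiset.map_map]
    simp only [Function.comp_def, eval_sub, eval_X, eval_C]
    exact (Multiset.prod_map_erase (f := (α - ·)) hβ).symm
  rw [hderiv, heval, map_mul, map_multiset_prod, map_multiset_prod, Multiset.map_map,
    Multiset.map_map]
  refine mul_le_mul_of_nonneg_left (Multiset.prod_map_le_prod_map₀ _ _ (fun _ _ => v.nonneg _)
    fun r hr => ?_) (v.nonneg _)
  calc v (β - r) = v ((β - α) + (α - r)) := by rw [sub_add_sub_cancel]
    _ ≤ max (v (β - α)) (v (α - r)) := hv _ _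
    _ ≤ v (α - r) := by
      rw [v.map_sub β α]
      exact max_le (hclosest r (Multiset.mem_toFinset.mpr (Multiset.mem_of_mem_erase hr))) le_rfl

theorem IsNonarchimedean.abv_eq_of_abv_pow_add_le (hv : IsNonarchimedean v) (hd : 2 ≤ d)
    (hr : 1 < r) (hrd : r ^ d = v c) {z : K} (hz : v (z ^ d + c) ≤ r) : v z = r := by
  have hlt : v (z ^ d + c) < v (-c) := by
    rw [map_neg_eq_map, ← hrd]
    exact hz.trans_lt (lt_self_pow₀ hr (by omega))
  have hzd : v (z ^ d) = v (-c) := by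
    simpa using hv.add_eq_right_of_lt hlt
  rwa [map_pow, map_neg_eq_map, ← hrd, pow_left_inj₀ (v.nonneg z) (by positivity) (by omega)]
    at hzd

theorem IsNonarchimedean.abv_iterate_eq_of_iterate_eq_zero (hv : IsNonarchimedean v)
    (hd : 2 ≤ d) (hr : 1 < r) (hrd : r ^ d = v c) {m : ℕ} {β : K}
    (hβ : (fun z => z ^ d + c)^[m] β = 0) {i : ℕ} (hi : i < m) :
    v ((fun z => z ^ d + c)^[i] β) = r := by
  obtain ⟨k, rfl⟩ := Nat.exists_eq_add_of_lt hi
  induction k generalizing i with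
  | zero =>
    refine hv.abv_eq_of_abv_pow_add_le hd hr hrd ?_
    rw [← Function.iterate_succ_apply' (fun z => z ^ d + c)]
    simp only [add_zero] at hβ
    rw [Nat.succ_eq_add_one, hβ, map_zero]
    positivity
  | succ k ih =>
    refine hv.abv_eq_of_abv_pow_add_le hd hr hrd (le_of_eq ?_)
    rw [← Function.iterate_succ_apply' (fun z => z ^ d + c)]
    exact ih (by rwa [add_right_comm i 1]) (by omega)

theorem IsNonarchimedean.exists_root_iterate_abv_sub_mul_le [IsAlgClosed K]
    (hv : IsNonarchimedean v) (hd : 2 ≤ d) (hc : 1 < v c) (m : ℕ) (α : K)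
    (hα : v ((fun z => z ^ d + c)^[m] α) ^ d = v c) :
    ∃ β, (fun z => z ^ d + c)^[m] β = 0 ∧
      v (α - β) * (v (d : K) * v ((fun z => z ^ d + c)^[m] α) ^ (d - 1)) ^ m ≤
        v ((fun z => z ^ d + c)^[m] α) := by
  set r := v ((fun z => z ^ d + c)^[m] α)
  have hr : 1 < r := (one_lt_pow_iff_of_nonneg (v.nonneg _) (by omega)).mp (hα ▸ hc)
  set P : K[X] := (X ^ d + C c).comp^[m] X
  have hPeval : ∀ x, P.eval x = (fun z => z ^ d + c)^[m] x := by simp [P]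
  have hmonic : P.Monic :=
    (monic_X_pow_add_C c (by omega)).iterate_comp_X (by rw [natDegree_X_pow_add_C]; omega) m
  have hdeg : 0 < P.natDegree := by
    rw [natDegree_iterate_comp, natDegree_X_pow_add_C, natDegree_X, mul_one]
    positivity
  obtain ⟨β, hβ, hle⟩ :=
    hv.exists_root_abv_sub_mul_abv_derivative_le (IsAlgClosed.splits P) hmonic hdeg α
  rw [IsRoot, hPeval] at hβ
  have hderiv : v (P.derivative.eval β) = (v (d : K) * r ^ (d - 1)) ^ m := by
    rw [eval_derivative_iterate_comp_X, map_prod,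
      Finset.prod_eq_pow_card (b := v (d : K) * r ^ (d - 1)) fun i hi => ?_, Finset.card_range]
    simp only [derivative_add, derivative_C, derivative_X_pow, add_zero, eval_mul, eval_C,
      eval_add, eval_pow, eval_X, map_mul, map_pow]
    rw [hv.abv_iterate_eq_of_iterate_eq_zero hd hr hα hβ (Finset.mem_range.mp hi)]
  exact ⟨β, hβ, by rwa [hderiv, hPeval] at hle⟩

theorem IsNonarchimedean.mul_le_one_of_mul_pow_le (hv : IsNonarchimedean v) (hd : 2 ≤ d)
    {m : ℕ} (hm : m = if d = 2 then 2 else 1) {a : ℝ} (ha : 0 ≤ a) (hr : 1 < r)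
    (h : a * (v (d : K) * r ^ (d - 1)) ^ m ≤ r) :
    a * (r * v (d : K) * v (2 : K)) ≤ 1 := by
  refine le_of_mul_le_mul_right ?_ (zero_lt_one.trans hr)
  by_cases hd2 : d = 2
  · subst hd2
    obtain rfl : m = 2 := by simpa using hm
    calc _ = a * (v (2 : K) * r ^ (2 - 1)) ^ 2 := by push_cast; ring
      _ ≤ 1 * r := by rwa [one_mul]
  · obtain rfl : m = 1 := by simpa [hd2] using hm
    have hv2 : v (2 : K) ≤ 1 := by exact_mod_cast hv.apply_natCast_le_one (n := 2)
    calc _ = a * v (d : K) * (r ^ 2 * v (2 : K)) := by ring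
      _ ≤ a * v (d : K) * (r ^ (d - 1) * 1) := by
        gcongr
        · exact hr.le
        · omega
      _ ≤ 1 * r := by simpa [mul_assoc] using h

end

theorem Real.log_le_of_mul_mul_mul_le_one {a r x y : ℝ} {d : ℕ} (hd : d ≠ 0) (ha : 0 < a)
    (hr : 0 < r) (hx : 0 < x) (hy : 0 < y) (h : a * (r * x * y) ≤ 1) :
    Real.log a ≤ -(1 / d) * Real.log (r ^ d) - Real.log x - Real.log y := by
  have hlog : Real.log a + Real.log r + Real.log x + Real.log y ≤ 0 := by
    rw [← Real.log_mul ha.ne' hr.ne', ← Real.log_mul (by positivity) hx.ne',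
      ← Real.log_mul (by positivity) hy.ne']
    exact Real.log_nonpos (by positivity) (by linarith)
  rw [Real.log_pow]
  field_simp
  linarith

theorem nonarch_close_to_root {K : Type*} [Field K] [IsAlgClosed K] [CharZero K]
    (v : AbsoluteValue K ℝ)
    (hna : ∀ x y : K, v (x + y) ≤ max (v x) (v y))
    (d : ℕ) (hd : 2 ≤ d) (c : K) (hc : v c > 1)
    (m : ℕ) (hm : m = if d = 2 then 2 else 1)
    (α : K) (hα : v ((fun z : K => z ^ d + c)^[m] α) ^ d = v c) :
    ∃ β : K, (fun z : K => z ^ d + c)^[m] β = 0 ∧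
      Real.log (v (α - β)) ≤
        -(1 / d) * Real.log (v c) - Real.log (v (d : K)) - Real.log (v (2 : K)) := by
  obtain ⟨β, hβ, hle⟩ :=
    IsNonarchimedean.exists_root_iterate_abv_sub_mul_le hna hd hc m α hα
  refine ⟨β, hβ, ?_⟩
  have hαβ : 0 < v (α - β) := v.pos <| sub_ne_zero.mpr <| by
    rintro rfl
    rw [hβ, map_zero, zero_pow (by omega)] at hα
    linarith
  set r := v ((fun z : K => z ^ d + c)^[m] α)
  have hr : 1 < r := (one_lt_pow_iff_of_nonneg (v.nonneg _) (by omega)).mp (hα ▸ hc)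
  rw [← hα]
  exact Real.log_le_of_mul_mul_mul_le_one (by omega) hαβ (zero_lt_one.trans hr)
    (v.pos (Nat.cast_ne_zero.mpr (by omega))) (v.pos two_ne_zero)
    (IsNonarchimedean.mul_le_one_of_mul_pow_le hna hd hm hαβ.le hr hle)
end

section
/- Let K be an algebraically closed field of characteristic zero equipped with a nonarchimedean multiplicative absolute value v, let d ≥ 2 be an integer, c ∈ K with v(c) > 1, and φ(z) = z^d + c. Set m = 2 if d = 2 and m = 1 otherwise. Let α ∈ K and let L be a real number such that max(log v(φ^[k](α)), 0)/d^k tends to L as k → ∞. Then for every finite set X of natural numbers there is a subset Y ⊆ X with (d^m + 1)·|Y| ≥ |X| − m such that for all i, j ∈ Y with j > i and φ^[j](α) ≠ φ^[i](α), one has (1/d)·log v(c) + log v(φ^[j](α) − φ^[i](α)) ≤ d^{j+1}·L − log v(d·1_K) − log v(2·1_K). -/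
open Filter Polynomial Finset

/-!
Put `R = v(c)^(1/d)`. Once `v(z) > R` the constant term of `z^d + c` is negligible, so
`v(φ z) = v(z)^d > R`: the orbit escapes, the indices at which it has escaped form a final
segment, and there `log v(z_k) = d^k L` for `z_k = φ^[k] α`.

A root `γ` of `φ^[m]` has `v(φ^[i] γ) = R` for all `i < m` (a smaller value is sent above `R`,
a larger one escapes), so `v((φ^[m])'(γ)) = (v(d) R^(d-1))^m`. Comparing the factorisation
`φ^[m] z = ∏ (z - γ)` at the nearest root with the one of the derivative shows that
`v(φ^[m] z) ≤ R` puts `z` in a ball of radius `(R v(2) v(d))⁻¹` around a root; for `d = 2` this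
needs `m = 2`.

So every index `k` except at most `m` (those where the orbit escapes between `k` and `k + m`)
is either escaped or lies in one of `d^m` balls, and the pigeonhole principle yields `Y`: for an
escaped pair `R v(z_j - z_i) ≤ v(z_j)^2 ≤ v(z_{j+1})`, for a pair in one ball the radius bounds
the distance.
-/

theorem Finset.exists_card_le_mul_card_fiber_of_maps_to {α β : Type*} [DecidableEq β]
    {s : Finset α} {t : Finset β} {f : α → β} (hf : ∀ a ∈ s, f a ∈ t) (ht : t.Nonempty) :
    ∃ y ∈ t, #s ≤ #t * #{x ∈ s | f x = y} := by
  have ht0 : (0 : ℚ) < #t := by exact_mod_cast ht.card_pos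
  obtain ⟨y, hy, hle⟩ := exists_le_card_fiber_of_nsmul_le_card_of_maps_to hf ht
    (b := (#s : ℚ) / #t) (by rw [nsmul_eq_mul, mul_div_cancel₀ _ ht0.ne'])
  refine ⟨y, hy, ?_⟩
  rw [div_le_iff₀ ht0, mul_comm] at hle
  exact_mod_cast hle

theorem card_filter_not_and_add_le {p : ℕ → Prop} [DecidablePred p] (hp : Monotone p)
    (s : Finset ℕ) (m : ℕ) : #{k ∈ s | ¬ p k ∧ p (k + m)} ≤ m := by
  by_cases h : ∃ n, p n
  · calc #{k ∈ s | ¬ p k ∧ p (k + m)} ≤ #(Ico (Nat.find h - m) (Nat.find h)) := by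
          refine card_le_card fun k hk => ?_
          obtain ⟨hk, hpk⟩ := (mem_filter.1 hk).2
          have h1 : k < Nat.find h := not_le.1 fun hle => hk (hp hle (Nat.find_spec h))
          have h2 : Nat.find h ≤ k + m := Nat.find_min' h hpk
          exact mem_Ico.2 ⟨by omega, h1⟩
      _ ≤ m := by rw [Nat.card_Ico]; omega
  · simp [not_exists.1 h]

theorem Polynomial.Splits.exists_mem_roots_abv_sub_mul_le {K : Type*} [Field K]
    {v : AbsoluteValue K ℝ} (hv : IsNonarchimedean v) {P : K[X]} (hP : P.Splits)
    (hmon : P.Monic) (hdeg : 0 < P.natDegree) (z : K) :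
    ∃ γ ∈ P.roots, v (z - γ) * v (P.derivative.eval γ) ≤ v (P.eval z) := by
  classical
  have hne : P.roots.toFinset.Nonempty := by
    rw [Multiset.toFinset_nonempty, ← Multiset.card_pos, ← hP.natDegree_eq_card_roots]
    exact hdeg
  obtain ⟨γ, hγ, hmin⟩ := P.roots.toFinset.exists_min_image (fun γ => v (z - γ)) hne
  rw [Multiset.mem_toFinset] at hγ
  refine ⟨γ, hγ, ?_⟩
  rw [hP.eval_root_derivative hmon hγ, hP.eval_eq_prod_roots_of_monic hmon,
    ← Multiset.prod_map_erase hγ, map_mul, map_multiset_prod, map_multiset_prod, Multiset.map_map,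
    Multiset.map_map]
  gcongr
  refine Multiset.prod_map_le_prod_map₀ _ _ (fun _ _ => v.nonneg _) fun a ha => ?_
  have ha' := hmin a (Multiset.mem_toFinset.2 (Multiset.mem_of_mem_erase ha))
  calc v (γ - a) = v ((γ - z) + (z - a)) := by rw [sub_add_sub_cancel]
    _ ≤ max (v (z - γ)) (v (z - a)) := by rw [v.map_sub z γ]; exact hv _ _
    _ = v (z - a) := max_eq_right ha'

theorem eq_pow_mul_of_tendsto_div_pow {a : ℕ → ℝ} {d L : ℝ} (hd : d ≠ 0) {j : ℕ}
    (ha : ∀ k ≥ j, a (k + 1) = d * a k)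
    (hL : Tendsto (fun k => a k / d ^ k) atTop (nhds L)) : a j = d ^ j * L := by
  have hconst : ∀ k ≥ j, a k / d ^ k = a j / d ^ j := by
    intro k hk
    induction k, hk using Nat.le_induction with
    | base => rfl
    | succ k hk ih => rw [ha k hk, pow_succ, ← ih]; field_simp
  have := tendsto_nhds_unique hL (tendsto_const_nhds.congr' <|
    (eventually_ge_atTop j).mono fun k hk => (hconst k hk).symm)
  rw [this, mul_div_cancel₀ _ (pow_ne_zero _ hd)]

theorem IsNonarchimedean.abv_sub_le_max {K : Type*} [Field K] {v : AbsoluteValue K ℝ}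
    (hv : IsNonarchimedean v) (x y : K) : v (x - y) ≤ max (v x) (v y) := by
  simpa [sub_eq_add_neg] using hv x (-y)

theorem IsNonarchimedean.abv_sub_le_of_abv_sub_le {K : Type*} [Field K] {v : AbsoluteValue K ℝ}
    (hv : IsNonarchimedean v) {x y γ : K} {r : ℝ} (hx : v (x - γ) ≤ r) (hy : v (y - γ) ≤ r) :
    v (y - x) ≤ r := by
  simpa using (hv.abv_sub_le_max (y - γ) (x - γ)).trans (max_le hy hx)

theorem exists_subset_card_le_and_forall_or_exists {β : Type*} {p : ℕ → Prop} (hp : Monotone p)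
    {G : Finset β} {q : ℕ → β → Prop} {m : ℕ}
    (hq : ∀ k, ¬ p (k + m) → ∃ γ ∈ G, q k γ) (X : Finset ℕ) :
    ∃ Y ⊆ X, #X ≤ (#G + 1) * #Y + m ∧
      ((∀ k ∈ Y, p k) ∨ ∃ γ, ∀ k ∈ Y, ¬ p (k + m) ∧ q k γ) := by
  classical
  have hX : #X ≤ #{k ∈ X | p k ∨ ¬ p (k + m)} + m := by
    have hbad := card_filter_not_and_add_le hp X m
    rw [← card_filter_add_card_filter_not (fun k => p k ∨ ¬ p (k + m))]
    simp only [not_or, not_not] at hbad ⊢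
    omega
  set X₀ := {k ∈ X | p k ∨ ¬ p (k + m)}
  let f : ℕ → Option β := fun k => if h : p (k + m) then none else some (hq k h).choose
  have hf : ∀ k ∈ X₀, f k ∈ G.insertNone := fun k _ => by
    simp only [f]
    split_ifs with h
    · simp
    · simpa using (hq k h).choose_spec.1
  obtain ⟨y, -, hy⟩ := exists_card_le_mul_card_fiber_of_maps_to hf ⟨none, by simp⟩
  refine ⟨{k ∈ X₀ | f k = y}, (filter_subset _ _).trans (filter_subset _ _), ?_, ?_⟩
  · rw [card_insertNone] at hy
    omega
  · cases y with
    | none =>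
      left
      intro k hk
      simp only [mem_filter, X₀, f, dite_eq_left_iff, reduceCtorEq, imp_false, not_not] at hk
      tauto
    | some γ =>
      right
      refine ⟨γ, fun k hk => ?_⟩
      simp only [mem_filter, f] at hk
      split_ifs at hk with h
      · exact absurd hk.2 (by simp)
      · exact ⟨h, Option.some_injective _ hk.2 ▸ (hq k h).choose_spec.2⟩

section Dynamics

variable {K : Type*} [Field K] {v : AbsoluteValue K ℝ} {d : ℕ} {c : K} {R : ℝ}

local notation "φ" => fun z : K => z ^ d + c

theorem abv_pow_add_eq_pow (hv : IsNonarchimedean v) (hd : d ≠ 0) (hR : R ^ d = v c)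
    (hR0 : 0 ≤ R) {z : K} (hz : R < v z) : v (z ^ d + c) = v z ^ d := by
  rw [hv.add_eq_left_of_lt (by rw [map_pow, ← hR]; exact pow_lt_pow_left₀ hz hR0 hd), map_pow]

theorem abv_le_abv_pow_add (hv : IsNonarchimedean v) (hd : d ≠ 0) (hR : R ^ d = v c)
    (hR1 : 1 ≤ R) {z : K} (hz : R < v z) : v z ≤ v (z ^ d + c) := by
  rw [abv_pow_add_eq_pow hv hd hR (zero_le_one.trans hR1) hz]
  exact le_self_pow₀ (hR1.trans hz.le) hd

theorem lt_abv_pow_add_of_abv_lt (hv : IsNonarchimedean v) (hd : 2 ≤ d) (hR : R ^ d = v c)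
    (hR1 : 1 < R) {z : K} (hz : v z < R) : R < v (z ^ d + c) := by
  have hlt : v (z ^ d) < v c := by
    rw [map_pow, ← hR]; exact pow_lt_pow_left₀ hz (v.nonneg z) (by omega)
  rw [hv.add_eq_right_of_lt hlt, ← hR]
  exact lt_self_pow₀ hR1 (by omega)

theorem monotone_lt_abv_iterate (hv : IsNonarchimedean v) (hd : d ≠ 0) (hR : R ^ d = v c)
    (hR1 : 1 ≤ R) (z : K) : Monotone fun n => R < v (φ^[n] z) :=
  monotone_nat_of_le_succ fun n hn => by
    rw [Function.iterate_succ_apply']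
    exact hn.trans_le (abv_le_abv_pow_add hv hd hR hR1 hn)

theorem lt_abv_iterate (hv : IsNonarchimedean v) (hd : d ≠ 0) (hR : R ^ d = v c)
    (hR1 : 1 ≤ R) {z : K} (hz : R < v z) (n : ℕ) : R < v (φ^[n] z) :=
  monotone_lt_abv_iterate hv hd hR hR1 z (Nat.zero_le n) hz

theorem abv_iterate_le_abv_iterate (hv : IsNonarchimedean v) (hd : d ≠ 0) (hR : R ^ d = v c)
    (hR1 : 1 ≤ R) {z : K} {k l : ℕ} (hk : R < v (φ^[k] z)) (hkl : k ≤ l) :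
    v (φ^[k] z) ≤ v (φ^[l] z) := by
  induction l, hkl using Nat.le_induction with
  | base => rfl
  | succ l hkl ih =>
    rw [Function.iterate_succ_apply']
    exact ih.trans (abv_le_abv_pow_add hv hd hR hR1
      (monotone_lt_abv_iterate hv hd hR hR1 z hkl hk))

theorem abv_iterate_eq_of_iterate_eq_zero (hv : IsNonarchimedean v) (hd : 2 ≤ d)
    (hR : R ^ d = v c) (hR1 : 1 < R) {γ : K} {m i : ℕ} (hγ : φ^[m] γ = 0) (hi : i < m) :
    v (φ^[i] γ) = R := by
  obtain ⟨n, rfl⟩ : ∃ n, m = n + 1 + i := ⟨m - i - 1, by omega⟩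
  have hescape : ∀ k w, R < v w → φ^[k] w ≠ 0 := fun k w hw h0 => by
    have := lt_abv_iterate hv (by omega) hR hR1.le hw k
    rw [h0, map_zero] at this
    linarith
  rw [Function.iterate_add_apply] at hγ
  rcases lt_trichotomy (v (φ^[i] γ)) R with hlt | heq | hgt
  · rw [Function.iterate_succ_apply] at hγ
    exact absurd hγ (hescape n _ (lt_abv_pow_add_of_abv_lt hv hd hR hR1 hlt))
  · exact heq
  · exact absurd hγ (hescape (n + 1) _ hgt)

theorem mul_abv_sub_le_abv_pow_add (hv : IsNonarchimedean v) (hd : 2 ≤ d) (hR : R ^ d = v c)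
    (hR1 : 1 ≤ R) {x y : K} (hx : R < v x) (hxy : v x ≤ v y) :
    R * v (y - x) ≤ v (y ^ d + c) := by
  have hy : R < v y := hx.trans_le hxy
  calc R * v (y - x) ≤ v y * v y :=
        mul_le_mul hy.le ((hv.abv_sub_le_max y x).trans_eq (max_eq_left hxy)) (v.nonneg _)
          ((zero_le_one.trans hR1).trans hy.le)
    _ = v y ^ 2 := (sq _).symm
    _ ≤ v y ^ d := pow_le_pow_right₀ (hR1.trans hy.le) hd
    _ = v (y ^ d + c) := (abv_pow_add_eq_pow hv (by omega) hR (zero_le_one.trans hR1) hy).symm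

variable (d c) in
noncomputable def iteratePoly (n : ℕ) : K[X] := (fun p => p ^ d + C c)^[n] X

theorem iteratePoly_succ (n : ℕ) : iteratePoly d c (n + 1) = iteratePoly d c n ^ d + C c :=
  Function.iterate_succ_apply' _ _ _

theorem eval_iteratePoly (n : ℕ) (z : K) : (iteratePoly d c n).eval z = φ^[n] z := by
  induction n with
  | zero => simp [iteratePoly]
  | succ n ih => rw [iteratePoly_succ, Function.iterate_succ_apply', eval_add, eval_pow, eval_C, ih]

theorem natDegree_iteratePoly (n : ℕ) : (iteratePoly d c n).natDegree = d ^ n := by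
  induction n with
  | zero => simp [iteratePoly]
  | succ n ih => rw [iteratePoly_succ, natDegree_add_C, natDegree_pow, ih, pow_succ, mul_comm]

theorem monic_iteratePoly (hd : d ≠ 0) (n : ℕ) : (iteratePoly d c n).Monic := by
  induction n with
  | zero => exact monic_X
  | succ n ih =>
    rw [iteratePoly_succ]
    refine (ih.pow d).add_of_left (degree_C_le.trans_lt ?_)
    rw [← natDegree_pos_iff_degree_pos, natDegree_pow, natDegree_iteratePoly]
    positivity

theorem eval_derivative_iteratePoly (n : ℕ) (z : K) :
    (iteratePoly d c n).derivative.eval z = ∏ i ∈ range n, ((d : K) * (φ^[i] z) ^ (d - 1)) := by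
  induction n with
  | zero => simp [iteratePoly]
  | succ n ih =>
    rw [iteratePoly_succ, derivative_add, derivative_C, add_zero, derivative_pow, eval_mul,
      eval_mul, eval_C, eval_pow, eval_iteratePoly, ih, prod_range_succ]
    ring

theorem exists_finset_abv_sub_mul_le_abv_iterate [IsAlgClosed K] (hv : IsNonarchimedean v)
    (hd : 2 ≤ d) (hR : R ^ d = v c) (hR1 : 1 < R) (n : ℕ) :
    ∃ G : Finset K, #G ≤ d ^ n ∧
      ∀ z, ∃ γ ∈ G, v (z - γ) * (v (d : K) * R ^ (d - 1)) ^ n ≤ v (φ^[n] z) := by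
  classical
  have hmon : (iteratePoly d c n).Monic := monic_iteratePoly (by omega) n
  refine ⟨(iteratePoly d c n).roots.toFinset, ?_, fun z => ?_⟩
  · calc _ ≤ Multiset.card (iteratePoly d c n).roots := Multiset.toFinset_card_le _
      _ ≤ (iteratePoly d c n).natDegree := card_roots' _
      _ = d ^ n := natDegree_iteratePoly n
  · obtain ⟨γ, hγ, hle⟩ := (IsAlgClosed.splits _).exists_mem_roots_abv_sub_mul_le hv hmon
      (by rw [natDegree_iteratePoly]; positivity) z
    have hγ0 : φ^[n] γ = 0 := by
      rw [← eval_iteratePoly]; exact (mem_roots hmon.ne_zero).1 hγ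
    refine ⟨γ, Multiset.mem_toFinset.2 hγ, ?_⟩
    rwa [eval_derivative_iteratePoly, map_prod, prod_congr rfl fun i hi => by
      rw [map_mul, map_pow, abv_iterate_eq_of_iterate_eq_zero hv hd hR hR1 hγ0 (mem_range.1 hi)],
      prod_const, card_range, eval_iteratePoly] at hle

theorem sq_mul_le_pow_ite (hv : IsNonarchimedean v) (hd : 2 ≤ d) (hR1 : 1 ≤ R) :
    R ^ 2 * (v (d : K) * v 2) ≤ (v (d : K) * R ^ (d - 1)) ^ (if d = 2 then 2 else 1) := by
  split_ifs with h
  · subst h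
    exact le_of_eq (by norm_num; ring)
  · have hv2 : v 2 ≤ 1 := by simpa using hv.apply_natCast_le_one (n := 2)
    calc R ^ 2 * (v (d : K) * v 2) ≤ R ^ 2 * (v (d : K) * 1) := by gcongr
      _ = v (d : K) * R ^ 2 := by ring
      _ ≤ v (d : K) * R ^ (d - 1) := by gcongr; omega
      _ = _ := (pow_one _).symm

theorem exists_finset_abv_sub_le_of_abv_iterate_le [IsAlgClosed K] [CharZero K]
    (hv : IsNonarchimedean v) (hd : 2 ≤ d) (hR : R ^ d = v c) (hR1 : 1 < R)
    {m : ℕ} (hm : m = if d = 2 then 2 else 1) :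
    ∃ G : Finset K, #G ≤ d ^ m ∧
      ∀ z, v (φ^[m] z) ≤ R → ∃ γ ∈ G, v (z - γ) ≤ (R * (v (d : K) * v 2))⁻¹ := by
  obtain ⟨G, hG, hcover⟩ := exists_finset_abv_sub_mul_le_abv_iterate hv hd hR hR1 m
  refine ⟨G, hG, fun z hz => ?_⟩
  obtain ⟨γ, hγ, hle⟩ := hcover z
  refine ⟨γ, hγ, ?_⟩
  have hR0 : 0 < R := one_pos.trans hR1
  have hC : 0 < v (d : K) * v 2 := mul_pos (v.pos (by norm_cast; omega)) (v.pos two_ne_zero)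
  rw [← one_div, le_div_iff₀ (mul_pos hR0 hC)]
  refine le_of_mul_le_mul_right ?_ hR0
  calc v (z - γ) * (R * (v (d : K) * v 2)) * R = v (z - γ) * (R ^ 2 * (v (d : K) * v 2)) := by
        ring
    _ ≤ v (z - γ) * (v (d : K) * R ^ (d - 1)) ^ m := by
        gcongr
        exact hm ▸ sq_mul_le_pow_ite hv hd hR1.le
    _ ≤ 1 * R := by rw [one_mul]; exact hle.trans hz

theorem log_abv_iterate_eq_of_lt (hv : IsNonarchimedean v) (hd : d ≠ 0) (hR : R ^ d = v c)
    (hR1 : 1 ≤ R) {α : K} {L : ℝ}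
    (hL : Tendsto (fun k => max (Real.log (v (φ^[k] α))) 0 / (d : ℝ) ^ k) atTop (nhds L))
    {j : ℕ} (hj : R < v (φ^[j] α)) : Real.log (v (φ^[j] α)) = d ^ j * L := by
  have hesc : ∀ k ≥ j, R < v (φ^[k] α) := fun k hk =>
    monotone_lt_abv_iterate hv hd hR hR1 α hk hj
  have hlog : ∀ k ≥ j, 0 ≤ Real.log (v (φ^[k] α)) := fun k hk =>
    Real.log_nonneg (hR1.trans (hesc k hk).le)
  have := eq_pow_mul_of_tendsto_div_pow (Nat.cast_ne_zero.2 hd) (j := j) (fun k hk => ?_) hL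
  · rwa [max_eq_left (hlog j le_rfl)] at this
  · rw [max_eq_left (hlog k hk), max_eq_left (hlog (k + 1) (by omega)),
      Function.iterate_succ_apply', abv_pow_add_eq_pow hv hd hR (zero_le_one.trans hR1) (hesc k hk),
      Real.log_pow]

theorem mul_abv_sub_iterate_le_exp (hv : IsNonarchimedean v) (hd : 2 ≤ d) (hR : R ^ d = v c)
    (hR1 : 1 ≤ R) {α : K} {L : ℝ}
    (hL : Tendsto (fun k => max (Real.log (v (φ^[k] α))) 0 / (d : ℝ) ^ k) atTop (nhds L))
    {i j : ℕ} (hi : R < v (φ^[i] α)) (hij : i ≤ j) :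
    R * v (φ^[j] α - φ^[i] α) ≤ Real.exp (d ^ (j + 1) * L) := by
  have hd0 : d ≠ 0 := by omega
  have hj : R < v (φ^[j + 1] α) := monotone_lt_abv_iterate hv hd0 hR hR1 α (by omega) hi
  rw [← log_abv_iterate_eq_of_lt hv hd0 hR hR1 hL hj,
    Real.exp_log (zero_lt_one.trans_le hR1 |>.trans hj), Function.iterate_succ_apply']
  exact mul_abv_sub_le_abv_pow_add hv hd hR hR1 hi
    (abv_iterate_le_abv_iterate hv hd0 hR hR1 hi hij)

theorem mul_abv_sub_mul_le_one [CharZero K] (hv : IsNonarchimedean v) (hd : d ≠ 0) (hR : 0 < R)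
    {x y γ : K} (hx : v (x - γ) ≤ (R * (v (d : K) * v 2))⁻¹)
    (hy : v (y - γ) ≤ (R * (v (d : K) * v 2))⁻¹) : R * v (y - x) * (v (d : K) * v 2) ≤ 1 := by
  have hC : 0 < R * (v (d : K) * v 2) :=
    mul_pos hR (mul_pos (v.pos (Nat.cast_ne_zero.2 hd)) (v.pos two_ne_zero))
  have hxy : v (y - x) ≤ (R * (v (d : K) * v 2))⁻¹ * 1 := by
    rw [mul_one]; exact hv.abv_sub_le_of_abv_sub_le hx hy
  linarith [(le_inv_mul_iff₀' hC).1 hxy]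

theorem log_add_log_abv_le_of_mul_le_exp [CharZero K] (hc : 1 < v c) (hd : d ≠ 0) {x : K}
    (hx : x ≠ 0) {H : ℝ} (h : v c ^ (1 / (d : ℝ)) * v x * (v (d : K) * v 2) ≤ Real.exp H) :
    1 / d * Real.log (v c) + Real.log (v x) ≤ H - Real.log (v (d : K)) - Real.log (v 2) := by
  have hR : 0 < v c ^ (1 / (d : ℝ)) := Real.rpow_pos_of_pos (one_pos.trans hc) _
  have hvd : 0 < v (d : K) := v.pos (Nat.cast_ne_zero.2 hd)
  have hv2 : 0 < v (2 : K) := v.pos two_ne_zero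
  have hvx : 0 < v x := v.pos hx
  have := Real.log_le_log (by positivity) h
  rw [Real.log_exp, Real.log_mul (by positivity) (by positivity), Real.log_mul hR.ne' hvx.ne',
    Real.log_mul hvd.ne' hv2.ne', Real.log_rpow (one_pos.trans hc)] at this
  linarith

end Dynamics

theorem nonarch_pigeonhole {K : Type*} [Field K] [IsAlgClosed K] [CharZero K]
    (v : AbsoluteValue K ℝ)
    (hna : ∀ x y : K, v (x + y) ≤ max (v x) (v y))
    (d : ℕ) (hd : 2 ≤ d) (c : K) (hc : v c > 1)
    (m : ℕ) (hm : m = if d = 2 then 2 else 1)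
    (α : K) (L : ℝ)
    (hL : Tendsto (fun k : ℕ =>
        max (Real.log (v ((fun z : K => z ^ d + c)^[k] α))) 0 / (d : ℝ) ^ k)
      atTop (nhds L)) :
    ∀ X : Finset ℕ, ∃ Y : Finset ℕ, Y ⊆ X ∧
      ((d ^ m + 1 : ℤ)) * Y.card ≥ (X.card : ℤ) - m ∧
      ∀ i ∈ Y, ∀ j ∈ Y, i < j →
        (fun z : K => z ^ d + c)^[j] α ≠ (fun z : K => z ^ d + c)^[i] α →
        (1 / d) * Real.log (v c) +
            Real.log (v ((fun z : K => z ^ d + c)^[j] α -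
              (fun z : K => z ^ d + c)^[i] α)) ≤
          (d : ℝ) ^ (j + 1) * L - Real.log (v (d : K)) - Real.log (v (2 : K)) := by
  intro X
  have hv : IsNonarchimedean v := hna
  set φ := fun z : K => z ^ d + c
  set R := v c ^ (1 / (d : ℝ)) with hRdef
  have hR : R ^ d = v c := by
    rw [hRdef, one_div]; exact Real.rpow_inv_natCast_pow (v.nonneg c) (by omega)
  have hR1 : 1 < R := Real.one_lt_rpow hc (by positivity)
  have hL0 : 0 ≤ L := ge_of_tendsto' hL fun k => by positivity
  obtain ⟨G, hG, hcover⟩ := exists_finset_abv_sub_le_of_abv_iterate_le hv hd hR hR1 hm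
  obtain ⟨Y, hYX, hcard, hY⟩ := exists_subset_card_le_and_forall_or_exists
    (monotone_lt_abv_iterate hv (by omega) hR hR1.le α) (G := G)
    (q := fun k γ => v (φ^[k] α - γ) ≤ (R * (v (d : K) * v 2))⁻¹)
    (fun k hk => hcover _ (by rwa [← Function.iterate_add_apply, add_comm, ← not_lt])) X
  refine ⟨Y, hYX, ?_, fun i hi j hj hij hne => ?_⟩
  · have hXY : #X ≤ (d ^ m + 1) * #Y + m := hcard.trans (by gcongr)
    zify at hXY
    linarith
  refine log_add_log_abv_le_of_mul_le_exp hc (by omega) (sub_ne_zero.2 hne) ?_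
  rcases hY with hesc | ⟨γ, hγ⟩
  · have hC1 : v (d : K) * v 2 ≤ 1 := mul_le_one₀ hv.apply_natCast_le_one (v.nonneg _)
      (by simpa using hv.apply_natCast_le_one (n := 2))
    exact (mul_le_of_le_one_right (by positivity) hC1).trans
      (mul_abv_sub_iterate_le_exp hv hd hR hR1.le hL (hesc i hi) hij.le)
  · exact (mul_abv_sub_mul_le_one hv (by omega) (one_pos.trans hR1) (hγ i hi).2 (hγ j hj).2).trans
      (Real.one_le_exp (by positivity))
end

section
/- Let d ≥ 2 be an integer and let c be a nonzero integer. Set φ(z) = z^d + c as a map ℚ → ℚ. Then for every α ∈ ℚ there exists a real number L such that h(φ^[k](α))/d^k tends to L as k → ∞, and this L satisfies |L − h(α)| ≤ log|2c| / (d − 1). -/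
/-!
Write `φ(z) = z ^ d + c`. If `q = p / n` in lowest terms, then `φ(q) = (p ^ d + c n ^ d) / n ^ d`
is again in lowest terms, and comparing `max(|p ^ d + c n ^ d|, n ^ d)` with `max(|p|, n) ^ d` in
both directions gives `|h(φ(q)) - d h(q)| ≤ log (1 + |c|) ≤ log |2c|`. Dividing by `d ^ (k+1)`,
the sequence `h(φ^[k] α) / d ^ k` moves by at most `log |2c| / d ^ (k+1)` at step `k`, so it is
Cauchy and its limit lies within the geometric sum `log |2c| / (d - 1)` of `h(α)`.
-/

open Filter

/-- The absolute logarithmic height of a rational number. -/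
noncomputable def ratHeight (q : ℚ) : ℝ := Real.log (max (|q.num| : ℝ) (q.den : ℝ))

open Topology

theorem Rat.add_intCast_num (q : ℚ) (n : ℤ) : (q + n).num = q.num + n * q.den := by
  have h := Rat.mul_den_eq_num (q + n)
  rw [Rat.add_intCast_den, add_mul, Rat.mul_den_eq_num] at h
  exact_mod_cast h.symm

theorem ratHeight_pow_add_intCast (q : ℚ) (d : ℕ) (c : ℤ) :
    ratHeight (q ^ d + c) =
      Real.log (max |(q.num : ℝ) ^ d + c * (q.den : ℝ) ^ d| ((q.den : ℝ) ^ d)) := by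
  rw [ratHeight, Rat.add_intCast_num, Rat.add_intCast_den, Rat.num_pow, Rat.den_pow]
  push_cast
  rfl

section PowAddMulPow

variable (d : ℕ) (a b c : ℝ)

theorem max_abs_pow_add_mul_pow_le (hb : 0 ≤ b) :
    max |a ^ d + c * b ^ d| (b ^ d) ≤ (1 + |c|) * max |a| b ^ d := by
  have ha : |a| ^ d ≤ max |a| b ^ d := pow_le_pow_left₀ (abs_nonneg a) (le_max_left _ _) d
  have hb' : b ^ d ≤ max |a| b ^ d := pow_le_pow_left₀ hb (le_max_right _ _) d
  have hc : 0 ≤ |c| * max |a| b ^ d := by positivity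
  refine max_le ?_ (by linarith)
  calc |a ^ d + c * b ^ d| ≤ |a| ^ d + |c| * b ^ d := (abs_add_le _ _).trans_eq <| by
        rw [abs_pow, abs_mul, abs_of_nonneg (pow_nonneg hb d)]
    _ ≤ (1 + |c|) * max |a| b ^ d := by nlinarith [abs_nonneg c]

theorem max_abs_pow_le_mul_max_abs_pow_add_mul_pow (hb : 0 ≤ b) :
    max |a| b ^ d ≤ (1 + |c|) * max |a ^ d + c * b ^ d| (b ^ d) := by
  set N := max |a ^ d + c * b ^ d| (b ^ d)
  have hN : |a ^ d + c * b ^ d| ≤ N := le_max_left _ _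
  have hbN : b ^ d ≤ N := le_max_right _ _
  have hcN : 0 ≤ |c| * N := mul_nonneg (abs_nonneg c) ((pow_nonneg hb d).trans hbN)
  have ha : |a| ^ d ≤ N + |c| * N := by
    calc |a| ^ d = |(a ^ d + c * b ^ d) - c * b ^ d| := by rw [add_sub_cancel_right, abs_pow]
      _ ≤ |a ^ d + c * b ^ d| + |c| * b ^ d := (abs_sub _ _).trans_eq <| by
        rw [abs_mul, abs_of_nonneg (pow_nonneg hb d)]
      _ ≤ N + |c| * N := by gcongr
  rcases le_total |a| b with h | h
  · rw [max_eq_right h]; linarith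
  · rw [max_eq_left h]; linarith

end PowAddMulPow

theorem Real.abs_log_sub_log_le {x y K : ℝ} (hx : 0 < x) (hy : 0 < y) (hxy : x ≤ K * y)
    (hyx : y ≤ K * x) : |Real.log x - Real.log y| ≤ Real.log K := by
  have hK : 0 < K := pos_of_mul_pos_left (hx.trans_le hxy) hy.le
  have h₁ := Real.log_le_log hx hxy
  have h₂ := Real.log_le_log hy hyx
  rw [Real.log_mul hK.ne' hy.ne'] at h₁
  rw [Real.log_mul hK.ne' hx.ne'] at h₂
  exact abs_sub_le_iff.mpr ⟨by linarith, by linarith⟩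

theorem abs_ratHeight_pow_add_intCast_sub_le (q : ℚ) (d : ℕ) (c : ℤ) :
    |ratHeight (q ^ d + c) - d * ratHeight q| ≤ Real.log (1 + |(c : ℝ)|) := by
  have hden : (0 : ℝ) < q.den := by exact_mod_cast q.pos
  have hmax : 0 < max |(q.num : ℝ)| q.den := lt_max_of_lt_right hden
  rw [ratHeight_pow_add_intCast, ratHeight, ← Real.log_pow]
  exact Real.abs_log_sub_log_le (lt_max_of_lt_right (pow_pos hden d)) (pow_pos hmax d)
    (max_abs_pow_add_mul_pow_le d _ _ _ hden.le)
    (max_abs_pow_le_mul_max_abs_pow_add_mul_pow d _ _ _ hden.le)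

/-- Tate's telescoping argument. -/
theorem exists_tendsto_div_pow_of_abs_sub_mul_le {f : ℕ → ℝ} {d C : ℝ} (hd : 1 < d)
    (hf : ∀ k, |f (k + 1) - d * f k| ≤ C) :
    ∃ L, Tendsto (fun k => f k / d ^ k) atTop (𝓝 L) ∧ |L - f 0| ≤ C / (d - 1) := by
  have hd₀ : 0 < d := zero_lt_one.trans hd
  have hstep : ∀ k, dist (f k / d ^ k) (f (k + 1) / d ^ (k + 1)) ≤ C / d * d⁻¹ ^ k := by
    intro k
    have hdk : 0 < d ^ (k + 1) := pow_pos hd₀ _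
    calc dist (f k / d ^ k) (f (k + 1) / d ^ (k + 1))
        = |f (k + 1) - d * f k| / d ^ (k + 1) := by
          rw [Real.dist_eq, abs_sub_comm, ← abs_of_pos hdk, ← abs_div, abs_of_pos hdk]
          congr 1
          field_simp
          ring
      _ ≤ C / d ^ (k + 1) := by gcongr; exact hf k
      _ = C / d * d⁻¹ ^ k := by rw [inv_pow, pow_succ]; field_simp
  have hr : d⁻¹ < 1 := inv_lt_one_of_one_lt₀ hd
  obtain ⟨L, hL⟩ := cauchySeq_tendsto_of_complete (cauchySeq_of_le_geometric _ _ hr hstep)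
  refine ⟨L, hL, ?_⟩
  have h := dist_le_of_le_geometric_of_tendsto₀ _ _ hr hstep hL
  rw [pow_zero, div_one, Real.dist_eq, abs_sub_comm] at h
  convert h using 1
  field_simp

theorem canonical_height_minus_height_bound (d : ℕ) (hd : 2 ≤ d) (c : ℤ) (hc : c ≠ 0)
    (α : ℚ) :
    ∃ L : ℝ,
      Tendsto (fun k : ℕ =>
          ratHeight ((fun z : ℚ => z ^ d + (c : ℚ))^[k] α) / (d : ℝ) ^ k)
        atTop (nhds L) ∧
      |L - ratHeight α| ≤ Real.log |2 * (c : ℝ)| / ((d : ℝ) - 1) := by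
  have hd₁ : (1 : ℝ) < d := by exact_mod_cast hd
  obtain ⟨L, hL, hLα⟩ := exists_tendsto_div_pow_of_abs_sub_mul_le
      (f := fun k => ratHeight ((fun z : ℚ => z ^ d + (c : ℚ))^[k] α)) hd₁ fun k => by
    rw [Function.iterate_succ_apply']
    exact abs_ratHeight_pow_add_intCast_sub_le _ d c
  refine ⟨L, hL, hLα.trans ?_⟩
  have hc₁ : (1 : ℝ) ≤ |(c : ℝ)| := by exact_mod_cast Int.one_le_abs hc
  have hd₀ : (0 : ℝ) < d - 1 := by linarith
  gcongr
  rw [abs_mul, abs_two]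
  linarith
end

section
/- Let c be an integer and φ(z) = z² + c as a map ℚ → ℚ. Suppose α ∈ ℚ is a wandering point for φ, i.e. the iterates φ^[n](α), n ≥ 0, are pairwise distinct. Then every real number L such that h(φ^[k](α))/2^k tends to L as k → ∞ satisfies L ≥ (1/32)·max(log|c|, 1). -/
/-!
Two mechanisms bound the canonical height `L` of a wandering point `α` of `z ↦ z² + c`
from below. Denominators square under iteration, so `L ≥ log (den α)`. And once an iterate
satisfies `|x_n| ≥ 2t` with `t ≥ 1` and `t² ≥ |c|`, the orbit grows at least like `2 t^(2^k)`,
so `L ≥ log t / 2^n`. For `c > 0` this applies to `x_3 ≥ 4c`. For `c ≤ 0` with `|c|` small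
compared with `d = den α`, the denominator bound suffices when `d ≥ 2`, and a finite computation
shows `|x_4| ≥ 10` when `α` is an integer. When `-c > (3d² + 2)²`, either one of `x_1, x_2, x_3`
leaves the disc of radius `2√(-c)`, or `|x_0|, |x_1|, |x_2|` all lie within `2` of `√(-c)`;
since `d² x_0` and `d² x_1` are integers, the identity `x_0² - x_1² = x_1 - x_2` then forces
`|x_1| = |x_2|` or `|x_0| = |x_2|`, and the orbit repeats.
-/

open Filter

open Topology

def quadMap {R : Type*} [Semiring R] (c z : R) : R := z ^ 2 + c

section QuadMap

variable {R : Type*}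

theorem quadMap_iterate_succ [Semiring R] (c z : R) (k : ℕ) :
    (quadMap c)^[k + 1] z = ((quadMap c)^[k] z) ^ 2 + c :=
  Function.iterate_succ_apply' _ k z

theorem map_quadMap_iterate [Semiring R] {S : Type*} [Semiring S] (f : R →+* S) (c z : R)
    (k : ℕ) : f ((quadMap c)^[k] z) = (quadMap (f c))^[k] (f z) :=
  Function.Semiconj.iterate_right (fun w => by simp [quadMap]) k z

theorem quadMap_eq_of_abs_eq [Ring R] [LinearOrder R] {c z w : R} (h : |z| = |w|) :
    quadMap c z = quadMap c w := by
  rw [quadMap, quadMap, ← sq_abs z, h, sq_abs]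

variable [CommRing R] [LinearOrder R] [IsStrictOrderedRing R]

theorem two_mul_pow_le_abs_quadMap_iterate {c t z : R} (ht : 1 ≤ t) (hc : |c| ≤ t ^ 2)
    (hz : 2 * t ≤ |z|) (k : ℕ) : 2 * t ^ 2 ^ k ≤ |(quadMap c)^[k] z| := by
  induction k with
  | zero => simpa using hz
  | succ k ih =>
    rw [quadMap_iterate_succ, pow_succ, pow_mul]
    have hsq : (2 * t ^ 2 ^ k) ^ 2 ≤ ((quadMap c)^[k] z) ^ 2 :=
      (pow_le_pow_left₀ (by positivity) ih 2).trans_eq (sq_abs _)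
    have htk : t ^ 2 ≤ (t ^ 2 ^ k) ^ 2 :=
      pow_le_pow_left₀ (by positivity) (le_self_pow₀ ht (by positivity)) 2
    have := neg_abs_le c
    have := le_abs_self (((quadMap c)^[k] z) ^ 2 + c)
    nlinarith

end QuadMap

theorem log_den_le_ratHeight (q : ℚ) : Real.log q.den ≤ ratHeight q :=
  Real.log_le_log (by exact_mod_cast q.pos) (le_max_right _ _)

theorem ratHeight_nonneg (q : ℚ) : 0 ≤ ratHeight q :=
  (Real.log_nonneg (by exact_mod_cast q.pos)).trans (log_den_le_ratHeight q)

theorem log_abs_le_ratHeight (q : ℚ) : Real.log |(q : ℝ)| ≤ ratHeight q := by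
  rcases eq_or_ne q 0 with rfl | hq
  · simpa using ratHeight_nonneg 0
  refine Real.log_le_log (by positivity) (le_max_of_le_left ?_)
  rw [Rat.cast_def, abs_div, Nat.abs_cast]
  exact div_le_self (abs_nonneg _) (by exact_mod_cast q.pos)

theorem log_abs_intCast_le_log {c : ℤ} {y : ℝ} (hy : 1 ≤ y) (hc : |(c : ℝ)| ≤ y) :
    Real.log |(c : ℝ)| ≤ Real.log y := by
  rcases eq_or_ne c 0 with rfl | hc0
  · simpa using Real.log_nonneg hy
  · exact Real.log_le_log (by positivity) hc

theorem ratCast_quadMap_iterate (c : ℤ) (q : ℚ) (k : ℕ) :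
    (((quadMap (c : ℚ))^[k] q : ℚ) : ℝ) = (quadMap (c : ℝ))^[k] (q : ℝ) := by
  simpa using map_quadMap_iterate (Rat.castHom ℝ) c q k

theorem injective_ratCast_quadMap_iterate {c : ℤ} {α : ℚ}
    (hw : Function.Injective fun n => (quadMap (c : ℚ))^[n] α) :
    Function.Injective fun n => (quadMap (c : ℝ))^[n] (α : ℝ) := by
  simpa only [Function.comp_def, ratCast_quadMap_iterate] using
    (Rat.cast_injective (α := ℝ)).comp hw

theorem den_quadMap_iterate (c : ℤ) (q : ℚ) (k : ℕ) :
    ((quadMap (c : ℚ))^[k] q).den = q.den ^ 2 ^ k := by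
  induction k with
  | zero => simp
  | succ k ih =>
    rw [quadMap_iterate_succ, Rat.add_intCast_den, Rat.den_pow, ih, ← pow_mul, pow_succ]

theorem div_two_pow_le_of_tendsto {f : ℕ → ℝ} {L B : ℝ}
    (hf : Tendsto (fun k => f k / 2 ^ k) atTop (𝓝 L)) (n : ℕ)
    (h : ∀ k, 2 ^ k * B ≤ f (n + k)) : B / 2 ^ n ≤ L := by
  refine ge_of_tendsto' (hf.comp (tendsto_add_atTop_nat n)) fun k => ?_
  show B / 2 ^ n ≤ f (k + n) / 2 ^ (k + n)
  calc B / 2 ^ n = 2 ^ k * B / 2 ^ (k + n) := by rw [pow_add]; field_simp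
    _ ≤ f (k + n) / 2 ^ (k + n) := by rw [add_comm k n]; gcongr; exact h k

theorem abs_abs_sub_lt_two_of_sq_eq {x y R : ℝ} (hR : 0 < R) (h : x ^ 2 = y + R ^ 2)
    (hy : |y| < 2 * R) : |(|x| - R)| < 2 := by
  have hpos : 0 < |x| + R := by positivity
  have hy' : (|x| - R) * (|x| + R) = y := by rw [← sub_eq_of_eq_add h, ← sq_abs x]; ring
  refine lt_of_mul_lt_mul_right ?_ hpos.le
  rw [← abs_of_pos hpos, ← abs_mul, hy', abs_of_pos hpos]
  linarith [abs_nonneg x]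

theorem eq_zero_of_natCast_mul_eq_intCast {q : ℕ} (hq : 0 < q) {r : ℝ} {N : ℤ}
    (hN : q * r = N) (hr : q * |r| < 1) : r = 0 := by
  have : N = 0 := Int.abs_lt_one_iff.mp (by
    rw [← Int.cast_lt (R := ℝ), Int.cast_abs, ← hN, abs_mul, Nat.abs_cast]; simpa using hr)
  rw [this, Int.cast_zero, mul_eq_zero] at hN
  exact hN.resolve_left (by positivity)

theorem sub_eq_intCast_of_mul_add_lt {q : ℕ} (hq : 0 < q) {a b u : ℝ} {N M : ℤ}
    (ha : q * a = N) (hb : q * b = M) (hab : 4 * q < a + b) {δ : ℤ}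
    (hu : (a - b - δ) * (a + b) = u) (hu4 : |u| < 4) : a - b = δ := by
  have hint : (q : ℝ) * (a - b - δ) = ((N - M - q * δ : ℤ) : ℝ) := by
    push_cast; rw [← ha, ← hb]; ring
  have hsmall : (q : ℝ) * |a - b - δ| < 1 := by
    have habs : |a - b - δ| * (a + b) = |u| := by
      have hpos : 0 < a + b := by linarith [(Nat.cast_nonneg q : (0 : ℝ) ≤ q)]
      rw [← hu, abs_mul, abs_of_pos hpos]
    nlinarith [abs_nonneg (a - b - δ), (Nat.cast_pos.mpr hq : (0 : ℝ) < q)]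
  linarith [eq_zero_of_natCast_mul_eq_intCast hq hint hsmall]

theorem abs_eq_abs_of_abs_lt_two_mul_sqrt {m : ℝ} {q : ℕ} (hq : 0 < q)
    (hm : (3 * q + 2) ^ 2 < m) {x : ℕ → ℝ} (hx : ∀ k, x (k + 1) = x k ^ 2 - m)
    {N₀ N₁ : ℤ} (h₀ : q * x 0 = N₀) (h₁ : q * x 1 = N₁)
    (hsmall : ∀ i ∈ Finset.Icc 1 3, |x i| < 2 * √m) :
    |x 1| = |x 2| ∨ |x 0| = |x 2| := by
  have hR : 3 * q + 2 < √m := Real.lt_sqrt_of_sq_lt hm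
  have hmR : m = √m ^ 2 := (Real.sq_sqrt (by nlinarith)).symm
  have band (i : ℕ) (hi : i ≤ 2) : |(|x i| - √m)| < 2 :=
    abs_abs_sub_lt_two_of_sq_eq (by linarith) (by rw [hx, ← hmR]; ring)
      (hsmall (i + 1) (Finset.mem_Icc.mpr ⟨by omega, by omega⟩))
  obtain ⟨h0, h0'⟩ := abs_lt.mp (band 0 (by norm_num))
  obtain ⟨h1, h1'⟩ := abs_lt.mp (band 1 (by norm_num))
  obtain ⟨h2, h2'⟩ := abs_lt.mp (band 2 (by norm_num))
  have hq₀ : q * |x 0| = ((|N₀| : ℤ) : ℝ) := by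
    rw [Int.cast_abs, ← h₀, abs_mul, Nat.abs_cast]
  have hq₁ : q * |x 1| = ((|N₁| : ℤ) : ℝ) := by
    rw [Int.cast_abs, ← h₁, abs_mul, Nat.abs_cast]
  have hsum : 4 * q < |x 0| + |x 1| := by linarith
  -- `q |x 0|` and `q |x 1|` are integers while `|x 0| + |x 1| > 4q`, so `|x 0| - |x 1|` is the
  -- integer `δ` for which `(|x 0| - |x 1| - δ) (|x 0| + |x 1|)` is small; the signs of `x 1`
  -- and `x 2` determine `δ`.
  have pinned (δ : ℤ) (u : ℝ) :=
    sub_eq_intCast_of_mul_add_lt hq hq₀ hq₁ hsum (δ := δ) (u := u)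
  have hdiff : |x 0| ^ 2 - |x 1| ^ 2 = x 1 - x 2 := by
    rw [sq_abs, sq_abs]; linear_combination hx 1 - hx 0
  rcases abs_choice (x 1) with hs1 | hs1 <;> rcases abs_choice (x 2) with hs2 | hs2
  · have := pinned 0 (|x 1| - |x 2|) (by linear_combination hdiff - hs1 + hs2)
      (abs_lt.mpr ⟨by linarith, by linarith⟩)
    left; linear_combination -hdiff + (|x 0| + |x 1|) * this + hs1 - hs2
  · have := pinned 1 (|x 2| - |x 0|) (by linear_combination hdiff - hs1 - hs2)
      (abs_lt.mpr ⟨by linarith, by linarith⟩)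
    right; linear_combination hdiff - (|x 0| + |x 1|) * this - hs1 - hs2
  · have := pinned (-1) (|x 0| - |x 2|) (by linear_combination hdiff + hs1 + hs2)
      (abs_lt.mpr ⟨by linarith, by linarith⟩)
    right; linear_combination -hdiff + (|x 0| + |x 1|) * this - hs1 - hs2
  · have := pinned 0 (|x 2| - |x 1|) (by linear_combination hdiff + hs1 - hs2)
      (abs_lt.mpr ⟨by linarith, by linarith⟩)
    left; linear_combination hdiff - (|x 0| + |x 1|) * this + hs1 - hs2

theorem ten_le_abs_quadMap_iterate_four {c a : ℤ} (hc₀ : -25 ≤ c) (hc₁ : c ≤ 0)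
    (hw : ∀ i < 5, ∀ j < i, (quadMap c)^[j] a ≠ (quadMap c)^[i] a) :
    10 ≤ |(quadMap c)^[4] a| := by
  rcases le_or_gt 10 |a| with ha | ha
  · have := two_mul_pow_le_abs_quadMap_iterate (c := c) (t := (5 : ℤ)) (z := a) (by norm_num)
      (abs_le.mpr ⟨by linarith, by linarith⟩) (by linarith) 4
    exact le_trans (by norm_num) this
  · have hsmall : ∀ c ∈ Finset.Icc (-25 : ℤ) 0, ∀ a ∈ Finset.Icc (-9 : ℤ) 9,
        (∀ i < 5, ∀ j < i, (quadMap c)^[j] a ≠ (quadMap c)^[i] a) →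
          10 ≤ |(quadMap c)^[4] a| := by
      decide
    exact hsmall c (Finset.mem_Icc.mpr ⟨hc₀, hc₁⟩) a
      (Finset.mem_Icc.mpr (by have := abs_lt.mp ha; omega)) hw

section Orbit

variable {c : ℤ} {α : ℚ} {L : ℝ}
  (hL : Tendsto (fun k => ratHeight ((quadMap (c : ℚ))^[k] α) / 2 ^ k) atTop (𝓝 L))
include hL

theorem log_den_le_of_tendsto : Real.log α.den ≤ L := by
  simpa using div_two_pow_le_of_tendsto hL 0 fun k => by
    simpa [den_quadMap_iterate, Real.log_pow] using
      log_den_le_ratHeight ((quadMap (c : ℚ))^[k] α)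

theorem log_div_two_pow_le_of_tendsto {t : ℝ} (n : ℕ) (ht : 1 ≤ t)
    (hc : |(c : ℝ)| ≤ t ^ 2) (hn : 2 * t ≤ |(quadMap (c : ℝ))^[n] α|) : Real.log t / 2 ^ n ≤ L := by
  refine div_two_pow_le_of_tendsto hL n fun k => ?_
  have hesc := two_mul_pow_le_abs_quadMap_iterate ht hc hn k
  rw [← Function.iterate_add_apply, add_comm k n, ← ratCast_quadMap_iterate] at hesc
  calc 2 ^ k * Real.log t = Real.log (t ^ 2 ^ k) := by rw [Real.log_pow]; push_cast; ring
    _ ≤ Real.log |((quadMap (c : ℚ))^[n + k] α : ℝ)| :=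
        Real.log_le_log (by positivity)
          (by nlinarith [pow_pos (by linarith : (0 : ℝ) < t) (2 ^ k)])
    _ ≤ _ := log_abs_le_ratHeight _

theorem height_lower_bound_of_pos (hc : 0 < c) :
    (1 / 32) * max (Real.log |(c : ℝ)|) 1 ≤ L := by
  set x := fun k => (quadMap (c : ℝ))^[k] (α : ℝ)
  have hc1 : (1 : ℝ) ≤ c := by exact_mod_cast hc
  have hx1 : (c : ℝ) ≤ x 1 := by
    simp only [x, quadMap_iterate_succ]; nlinarith [sq_nonneg (α : ℝ)]
  have hx2 : 2 * (c : ℝ) ≤ x 2 := by simp only [x, quadMap_iterate_succ] at hx1 ⊢; nlinarith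
  have hx3 : 4 * (c : ℝ) ≤ x 3 := by simp only [x, quadMap_iterate_succ] at hx2 ⊢; nlinarith
  have hL' := log_div_two_pow_le_of_tendsto hL 3 (t := 2 * c) (by linarith)
    (by rw [abs_of_pos (by linarith)]; nlinarith) (by linarith [le_abs_self (x 3)])
  have hlog2 := Real.log_two_gt_d9
  have hmono : Real.log 2 ≤ Real.log (2 * c) := Real.log_le_log (by norm_num) (by linarith)
  have hmono' : Real.log |(c : ℝ)| ≤ Real.log (2 * c) :=
    Real.log_le_log (by positivity) (by rw [abs_of_pos (by linarith)]; linarith)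
  calc (1 / 32) * max (Real.log |(c : ℝ)|) 1 ≤ (1 / 32) * (4 * Real.log (2 * c)) := by
        gcongr; exact max_le (by linarith) (by linarith)
    _ = Real.log (2 * c) / 2 ^ 3 := by ring
    _ ≤ L := hL'

theorem height_lower_bound_of_two_le_den (hd : 2 ≤ α.den)
    (hc : |c| ≤ (3 * (α.den : ℤ) ^ 2 + 2) ^ 2) :
    (1 / 32) * max (Real.log |(c : ℝ)|) 1 ≤ L := by
  have hdR : (2 : ℝ) ≤ α.den := by exact_mod_cast hd
  have hlog2 := Real.log_two_gt_d9
  have hmono : Real.log 2 ≤ Real.log α.den := Real.log_le_log (by norm_num) hdR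
  have hcR : |(c : ℝ)| ≤ (α.den : ℝ) ^ 8 := by
    have : (3 * (α.den : ℝ) ^ 2 + 2) ^ 2 ≤ (α.den : ℝ) ^ 8 := by
      have hd2 : (4 : ℝ) ≤ (α.den : ℝ) ^ 2 := by nlinarith
      have : 3 * (α.den : ℝ) ^ 2 + 2 ≤ (α.den : ℝ) ^ 4 := by
        have hd1 : (0 : ℝ) ≤ (α.den : ℝ) ^ 2 + 1 := by positivity
        nlinarith [mul_nonneg (sub_nonneg.mpr hd2) hd1]
      nlinarith
    exact le_trans (by exact_mod_cast hc) this
  have hlogc := log_abs_intCast_le_log (one_le_pow₀ (by linarith)) hcR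
  rw [Real.log_pow, Nat.cast_ofNat] at hlogc
  calc (1 / 32) * max (Real.log |(c : ℝ)|) 1 ≤ (1 / 32) * (32 * Real.log α.den) := by
        gcongr; exact max_le (by linarith) (by linarith)
    _ = Real.log α.den := by ring
    _ ≤ L := log_den_le_of_tendsto hL

theorem height_lower_bound_of_den_eq_one (hd : α.den = 1) (hc₀ : -25 ≤ c) (hc₁ : c ≤ 0)
    (hw : Function.Injective fun n => (quadMap (c : ℚ))^[n] α) :
    (1 / 32) * max (Real.log |(c : ℝ)|) 1 ≤ L := by
  have hα := Rat.coe_int_num_of_den_eq_one hd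
  have hint (R : Type) [Ring R] (n : ℕ) :
      (((quadMap c)^[n] α.num : ℤ) : R) = (quadMap (c : R))^[n] (α.num : R) := by
    simpa using map_quadMap_iterate (Int.castRingHom R) c α.num n
  have h10 := ten_le_abs_quadMap_iterate_four (a := α.num) hc₀ hc₁ fun i _ j hj h =>
    hj.ne (hw (by beta_reduce; rw [← hα, ← hint ℚ, ← hint ℚ, h]))
  have hc25 : |(c : ℝ)| ≤ 5 ^ 2 := by
    have : |c| ≤ 5 ^ 2 := abs_le.mpr ⟨hc₀, by omega⟩
    exact_mod_cast this
  have hL' := log_div_two_pow_le_of_tendsto hL 4 (t := 5) (by norm_num) hc25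
    (by rw [← hα, Rat.cast_intCast, ← hint ℝ, ← Int.cast_abs]; exact_mod_cast h10)
  have hlog5 := Real.log_five_gt_d9
  have hlogc := log_abs_intCast_le_log (by norm_num) hc25
  rw [Real.log_pow, Nat.cast_ofNat] at hlogc
  calc (1 / 32) * max (Real.log |(c : ℝ)|) 1 ≤ (1 / 32) * (2 * Real.log 5) := by
        gcongr; exact max_le (by linarith) (by linarith)
    _ = Real.log 5 / 2 ^ 4 := by ring
    _ ≤ L := hL'

theorem height_lower_bound_of_sq_lt_neg (hc : (3 * (α.den : ℤ) ^ 2 + 2) ^ 2 < -c)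
    (hw : Function.Injective fun n => (quadMap (c : ℚ))^[n] α) :
    (1 / 32) * max (Real.log |(c : ℝ)|) 1 ≤ L := by
  set m : ℝ := -c
  set x := fun k => (quadMap (c : ℝ))^[k] (α : ℝ)
  have hx (k : ℕ) : x (k + 1) = x k ^ 2 - m := by
    simp only [x, m, quadMap_iterate_succ]; ring
  have hq : 0 < α.den ^ 2 := by positivity
  have hm : (3 * ((α.den ^ 2 : ℕ) : ℝ) + 2) ^ 2 < m := by simp only [m]; exact_mod_cast hc
  have hq1 : (1 : ℝ) ≤ ((α.den ^ 2 : ℕ) : ℝ) := by exact_mod_cast hq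
  have hm25 : 25 < m := by nlinarith
  have hcm : |(c : ℝ)| = m := by rw [abs_of_neg (by linarith)]
  by_cases hesc : ∃ i ∈ Finset.Icc 1 3, 2 * √m ≤ |x i|
  · obtain ⟨i, hi, hxi⟩ := hesc
    have hi3 := (Finset.mem_Icc.mp hi).2
    have hL' := log_div_two_pow_le_of_tendsto hL i (t := √m)
      (Real.one_le_sqrt.mpr (by linarith)) (by rw [Real.sq_sqrt (by linarith), hcm]) hxi
    have hlogm : 1 ≤ Real.log m :=
      (Real.le_log_iff_exp_le (by linarith)).mpr (by linarith [Real.exp_one_lt_d9])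
    have h8 : (2 : ℝ) ^ i ≤ 2 ^ 3 := pow_le_pow_right₀ (by norm_num) hi3
    rw [Real.log_sqrt (by linarith)] at hL'
    rw [hcm, max_eq_left hlogm]
    calc 1 / 32 * Real.log m ≤ Real.log m / 2 / 2 ^ 3 := by linarith
      _ ≤ Real.log m / 2 / 2 ^ i := by gcongr
      _ ≤ L := hL'
  · push Not at hesc
    have hαd : (α : ℝ) * α.den = α.num := by exact_mod_cast Rat.mul_den_eq_num α
    have hover := abs_eq_abs_of_abs_lt_two_mul_sqrt hq hm hx (N₀ := α.den * α.num)
      (N₁ := α.num ^ 2 + c * α.den ^ 2)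
      (by
        simp only [x, Function.iterate_zero, id]; push_cast
        linear_combination (α.den : ℝ) * hαd)
      (by
        simp only [x, quadMap_iterate_succ, Function.iterate_zero, id]; push_cast
        linear_combination ((α : ℝ) * α.den + α.num) * hαd)
      hesc
    have hnext (i j : ℕ) (h : |x i| = |x j|) : i + 1 = j + 1 :=
      injective_ratCast_quadMap_iterate hw <| by
        simp only [Function.iterate_succ_apply']; exact quadMap_eq_of_abs_eq h
    rcases hover with h | h
    · exact absurd (hnext 1 2 h) (by norm_num)
    · exact absurd (hnext 0 2 h) (by norm_num)

end Orbit

theorem quadratic_integer_height_lower_bound (c : ℤ) (α : ℚ)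
    (hw : ∀ i j : ℕ, i ≠ j →
      (fun z : ℚ => z ^ 2 + (c : ℚ))^[i] α ≠ (fun z : ℚ => z ^ 2 + (c : ℚ))^[j] α) :
    ∀ L : ℝ,
      Tendsto (fun k : ℕ =>
          ratHeight ((fun z : ℚ => z ^ 2 + (c : ℚ))^[k] α) / (2 : ℝ) ^ k)
        atTop (nhds L) →
      (1 / 32) * max (Real.log |(c : ℝ)|) 1 ≤ L := by
  intro L hL
  have hinj : Function.Injective fun n => (quadMap (c : ℚ))^[n] α :=
    fun i j h => by_contra fun hij => hw i j hij h
  rcases lt_or_ge 0 c with hpos | hnonpos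
  · exact height_lower_bound_of_pos hL hpos
  rcases le_or_gt |c| ((3 * (α.den : ℤ) ^ 2 + 2) ^ 2) with hsmall | hlarge
  · rcases eq_or_ne α.den 1 with hd | hd
    · rw [hd, Nat.cast_one] at hsmall
      exact height_lower_bound_of_den_eq_one hL hd (by linarith [neg_abs_le c]) hnonpos hinj
    · exact height_lower_bound_of_two_le_den hL (by have := α.pos; omega) hsmall
  · exact height_lower_bound_of_sq_lt_neg hL (by rwa [abs_of_nonpos hnonpos] at hlarge) hinj
end

section
/- Let c be an integer and φ(z) = z² + c as a map ℚ → ℚ. Suppose α ∈ ℚ is preperiodic for φ, i.e. φ^[i](α) = φ^[j](α) for some natural numbers i ≠ j. Then φ^[4](α) = φ^[2](α), and there exists an odd integer m such that either 4c = 1 − m² and 2·φ^[2](α) ∈ {1 + m, 1 − m}, or 4c = −(m² + 3) and 2·φ^[2](α) ∈ {−1 + m, −1 − m}. -/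
/-!
A preperiodic rational point of `z ↦ z² + c` is an integer, since the map squares denominators.
For a map `f : ℤ → ℤ` with `a - b ∣ f a - f b`, the differences `f^[k+s] x - f^[k] x` along a
periodic orbit divide one another cyclically, hence all agree up to sign; comparing first and
second differences shows that every periodic point has period at most `2`. For `z² + c` these are
the roots of `(β² - β + c)(β² + β + c + 1)`, which gives `m = 2β ∓ 1`. Finally, if `f t` is
periodic then `f t = f p` for the periodic point `p = f (f t)`, so `t = ±p`; and a nonzero periodic
point `p` never has `-p` in the image of `f ∘ f`, so an orbit enters its cycle after at most two
steps.
-/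

open Function

theorem associated_of_dvd_succ_of_periodic {M : Type*} [CommMonoidWithZero M] [IsCancelMulZero M]
    {g : ℕ → M} {n : ℕ} (hn : 0 < n) (hg : Periodic g n) (hdvd : ∀ k, g k ∣ g (k + 1))
    (k : ℕ) : Associated (g k) (g 0) := by
  have hchain : ∀ k t, g k ∣ g (k + t) := fun k t =>
    Nat.rel_of_forall_rel_succ_of_le (· ∣ ·) hdvd (Nat.le_add_right k t)
  induction k with
  | zero => rfl
  | succ k ih =>
    have hback : g (k + 1) ∣ g k := by
      have := hchain (k + 1) (n - 1)
      rwa [add_assoc, Nat.add_sub_cancel' hn, hg k] at this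
    exact (associated_of_dvd_dvd hback (hdvd k)).trans ih

theorem iterate_sub_eq_or_eq_neg_of_isPeriodicPt {f : ℤ → ℤ} (hf : ∀ a b, a - b ∣ f a - f b)
    {n : ℕ} {x : ℤ} (hn : 0 < n) (hx : IsPeriodicPt f n x) (s k : ℕ) :
    f^[k + s] x - f^[k] x = f^[s] x - x ∨ f^[k + s] x - f^[k] x = -(f^[s] x - x) := by
  refine Int.associated_iff.mp ?_
  simpa using associated_of_dvd_succ_of_periodic (g := fun k => f^[k + s] x - f^[k] x) hn
    (fun k => by simp only [add_right_comm _ n, iterate_add_apply _ _ n, hx.eq])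
    (fun k => by simpa only [add_right_comm k 1 s, iterate_succ_apply'] using hf _ _) k

theorem isPeriodicPt_two_of_isPeriodicPt {f : ℤ → ℤ} (hf : ∀ a b, a - b ∣ f a - f b)
    {n : ℕ} {x : ℤ} (hn : 0 < n) (hx : IsPeriodicPt f n x) : IsPeriodicPt f 2 x := by
  have hfirst := iterate_sub_eq_or_eq_neg_of_isPeriodicPt hf hn hx 1
  have hsecond := iterate_sub_eq_or_eq_neg_of_isPeriodicPt hf hn hx 2
  by_contra h2
  have hE0 : f^[2] x - x ≠ 0 := sub_ne_zero.mpr h2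
  -- Consecutive first differences agree up to sign; opposite signs would make the second
  -- difference `f^[k + 2] x - f^[k] x` vanish.
  have hconst : ∀ k, f^[k + 1 + 1] x - f^[k + 1] x = f^[k + 1] x - f^[k] x := fun k => by
    have := hsecond k
    rw [show k + 2 = k + 1 + 1 from rfl] at this
    rcases hfirst k with h | h <;> rcases hfirst (k + 1) with h' | h' <;> omega
  have hstep : ∀ k, f^[k + 1] x - f^[k] x = f^[1] x - x := fun k => by
    induction k with
    | zero => rfl
    | succ k ih => rw [hconst, ih]
  have hlinear : ∀ k : ℕ, f^[k] x - x = k * (f^[1] x - x) := fun k => by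
    induction k with
    | zero => simp
    | succ k ih => push_cast; linear_combination ih + hstep k
  have hd : f^[1] x - x = 0 := by
    have := hlinear n
    rw [hx.eq, sub_self, eq_comm, mul_eq_zero] at this
    exact this.resolve_left (by exact_mod_cast hn.ne')
  exact hE0 (by linear_combination hstep 1 + 2 * hd)

def quadraticMap {R : Type*} [CommRing R] (c : R) : R → R := fun z => z ^ 2 + c

section QuadraticMap

variable {R : Type*} [CommRing R] (c : R)

theorem quadraticMap_apply (z : R) : quadraticMap c z = z ^ 2 + c := rfl

theorem sub_dvd_quadraticMap_sub (a b : R) : a - b ∣ quadraticMap c a - quadraticMap c b :=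
  ⟨a + b, by simp only [quadraticMap_apply]; ring⟩

theorem quadraticMap_iterate_two_sub (β : R) :
    (quadraticMap c)^[2] β - β = (β ^ 2 - β + c) * (β ^ 2 + β + c + 1) := by
  simp only [iterate_succ_apply', iterate_zero_apply, quadraticMap_apply]
  ring

theorem isPeriodicPt_quadraticMap_two_iff [IsDomain R] {β : R} :
    IsPeriodicPt (quadraticMap c) 2 β ↔ β ^ 2 - β + c = 0 ∨ β ^ 2 + β + c + 1 = 0 := by
  rw [IsPeriodicPt, IsFixedPt, ← sub_eq_zero, quadraticMap_iterate_two_sub, mul_eq_zero]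

theorem intCast_quadraticMap_iterate (c : ℤ) (k : ℕ) (a : ℤ) :
    (((quadraticMap c)^[k] a : ℤ) : ℚ) = (quadraticMap (c : ℚ))^[k] (a : ℚ) :=
  Semiconj.iterate_right (fun z => by push_cast [quadraticMap_apply]; rfl) k a

theorem den_quadraticMap_iterate (c : ℤ) (k : ℕ) (q : ℚ) :
    ((quadraticMap (c : ℚ))^[k] q).den = q.den ^ 2 ^ k := by
  induction k with
  | zero => simp
  | succ k ih =>
    rw [iterate_succ_apply', quadraticMap_apply, Rat.add_intCast_den, Rat.den_pow, ih,
      ← pow_mul, pow_succ]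

end QuadraticMap

theorem Int.eq_zero_of_sq_eq_sq_add_one {a b : ℤ} (h : a ^ 2 = b ^ 2 + 1) : b = 0 := by
  have : (a - b) * (a + b) = 1 := by linear_combination h
  rcases Int.eq_one_or_neg_one_of_mul_eq_one' this with ⟨_, _⟩ | ⟨_, _⟩ <;> omega

theorem eq_zero_of_isPeriodicPt_quadraticMap_two {c p r : ℤ}
    (hp : IsPeriodicPt (quadraticMap c) 2 p) (hr : (quadraticMap c)^[2] r = -p) : p = 0 := by
  set s := quadraticMap c r with hs
  have hs' : s ^ 2 + c = -p := hr
  rcases (isPeriodicPt_quadraticMap_two_iff c).mp hp with hfix | hcycle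
  · have hs0 : s = 0 :=
      Int.eq_zero_of_sq_eq_sq_add_one (a := p - 1) (by linear_combination hfix - hs')
    have hp02 : p * (p - 2) = 0 := by rw [hs0] at hs'; linear_combination hfix - hs'
    rcases mul_eq_zero.mp hp02 with h | h
    · exact h
    -- Here `c = -2` and `s = r² - 2 = 0`, impossible over `ℤ`.
    · have hr2 : r * r = 2 := by
        rw [hs, quadraticMap_apply] at hs0; linear_combination hs0 - hfix + (p + 1) * h
      exact absurd (by rw [hr2]; rfl) (Int.sq_ne_two_mod_four r)
  · exact Int.eq_zero_of_sq_eq_sq_add_one (a := s) (by linear_combination hs' - hcycle)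

theorem isPeriodicPt_quadraticMap_iterate_two_of_iterate_three {c y : ℤ}
    (h : IsPeriodicPt (quadraticMap c) 2 ((quadraticMap c)^[3] y)) :
    IsPeriodicPt (quadraticMap c) 2 ((quadraticMap c)^[2] y) := by
  set f := quadraticMap c
  have hp : IsPeriodicPt f 2 (f^[4] y) := by
    simpa only [← iterate_add_apply] using h.apply_iterate 1
  have hfp : f (f^[4] y) = f (f^[2] y) := by
    simpa only [← iterate_succ_apply' f, ← iterate_add_apply] using h.eq
  have hsq : (f^[2] y) ^ 2 = (f^[4] y) ^ 2 := by
    simpa [f, quadraticMap_apply] using hfp.symm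
  show f^[2] (f^[2] y) = f^[2] y
  rw [← iterate_add_apply]
  rcases sq_eq_sq_iff_eq_or_eq_neg.mp hsq with hyp | hyp
  · exact hyp.symm
  · rw [hyp, eq_zero_of_isPeriodicPt_quadraticMap_two hp hyp, neg_zero]

theorem isPeriodicPt_quadraticMap_iterate_two_of_iterate {c y : ℤ} {k : ℕ}
    (h : IsPeriodicPt (quadraticMap c) 2 ((quadraticMap c)^[k] y)) :
    IsPeriodicPt (quadraticMap c) 2 ((quadraticMap c)^[2] y) := by
  set f := quadraticMap c
  have hdescend : ∀ j, IsPeriodicPt f 2 (f^[j + 2] y) → IsPeriodicPt f 2 (f^[2] y) := by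
    intro j
    induction j with
    | zero => exact id
    | succ j ih =>
      intro hj
      apply ih
      rw [show j + 1 + 2 = 3 + j by omega, iterate_add_apply] at hj
      rw [add_comm, iterate_add_apply]
      exact isPeriodicPt_quadraticMap_iterate_two_of_iterate_three hj
  have hk := h.apply_iterate 2
  rw [← iterate_add_apply, add_comm] at hk
  exact hdescend k hk

theorem isPeriodicPt_quadraticMap_iterate_two_of_iterate_eq {c a : ℤ} {i j : ℕ} (hij : i ≠ j)
    (h : (quadraticMap c)^[i] a = (quadraticMap c)^[j] a) :
    IsPeriodicPt (quadraticMap c) 2 ((quadraticMap c)^[2] a) := by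
  wlog hlt : i < j generalizing i j
  · exact this hij.symm h.symm (lt_of_le_of_ne (not_lt.mp hlt) hij.symm)
  have hper : IsPeriodicPt (quadraticMap c) (j - i) ((quadraticMap c)^[i] a) := by
    rw [IsPeriodicPt, IsFixedPt, ← iterate_add_apply, Nat.sub_add_cancel hlt.le, h]
  exact isPeriodicPt_quadraticMap_iterate_two_of_iterate
    (isPeriodicPt_two_of_isPeriodicPt (sub_dvd_quadraticMap_sub c) (Nat.sub_pos_of_lt hlt) hper)

theorem den_eq_one_of_quadraticMap_iterate_eq {c : ℤ} {q : ℚ} {i j : ℕ} (hij : i ≠ j)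
    (h : (quadraticMap (c : ℚ))^[i] q = (quadraticMap (c : ℚ))^[j] q) : q.den = 1 := by
  by_contra hden
  have htwo : 2 ≤ q.den := by have := q.den_pos; omega
  apply hij
  apply Nat.pow_right_injective le_rfl
  apply Nat.pow_right_injective htwo
  simpa only [den_quadraticMap_iterate] using congrArg Rat.den h

theorem quadratic_integer_preperiodic_classification (c : ℤ) (α : ℚ)
    (hpre : ∃ i j : ℕ, i ≠ j ∧
      (fun z : ℚ => z ^ 2 + (c : ℚ))^[i] α = (fun z : ℚ => z ^ 2 + (c : ℚ))^[j] α) :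
    (fun z : ℚ => z ^ 2 + (c : ℚ))^[4] α = (fun z : ℚ => z ^ 2 + (c : ℚ))^[2] α ∧
    ∃ m : ℤ, Odd m ∧
      ((4 * c = 1 - m ^ 2 ∧
          (2 * (fun z : ℚ => z ^ 2 + (c : ℚ))^[2] α = 1 + (m : ℚ) ∨
           2 * (fun z : ℚ => z ^ 2 + (c : ℚ))^[2] α = 1 - (m : ℚ))) ∨
       (4 * c = -(m ^ 2 + 3) ∧
          (2 * (fun z : ℚ => z ^ 2 + (c : ℚ))^[2] α = -1 + (m : ℚ) ∨
           2 * (fun z : ℚ => z ^ 2 + (c : ℚ))^[2] α = -1 - (m : ℚ)))) := by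
  have hφ : (fun z : ℚ => z ^ 2 + (c : ℚ)) = quadraticMap (c : ℚ) := rfl
  rw [hφ] at hpre ⊢
  obtain ⟨i, j, hij, heq⟩ := hpre
  have hα : ((α.num : ℤ) : ℚ) = α :=
    (Rat.den_eq_one_iff α).mp (den_eq_one_of_quadraticMap_iterate_eq hij heq)
  rw [← hα, ← intCast_quadraticMap_iterate, ← intCast_quadraticMap_iterate, Int.cast_inj] at heq
  have hβ := isPeriodicPt_quadraticMap_iterate_two_of_iterate_eq hij heq
  set β := (quadraticMap c)^[2] α.num
  rw [← hα, ← intCast_quadraticMap_iterate, ← intCast_quadraticMap_iterate,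
    show 4 = 2 + 2 from rfl, iterate_add_apply, hβ.eq]
  refine ⟨rfl, ?_⟩
  rcases (isPeriodicPt_quadraticMap_two_iff c).mp hβ with hfix | hcycle
  · exact ⟨2 * β - 1, ⟨β - 1, by ring⟩, Or.inl ⟨by linear_combination 4 * hfix,
      Or.inl (by push_cast; ring)⟩⟩
  · exact ⟨2 * β + 1, ⟨β, by ring⟩, Or.inr ⟨by linear_combination 4 * hcycle,
      Or.inl (by push_cast; ring)⟩⟩
end

section
/- Let k ≥ 3 be an integer, let c = −k² − k + 1, and let φ(z) = z² + c as a map ℚ → ℚ. Then φ^[2](k) = −3k + 2, and every real number L such that h(φ^[n](k))/2^n tends to L as n → ∞ satisfies L ≤ (1/4)·(log(3k − 2) + log(3/2)). -/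
open Filter

theorem small_height_family (k : ℤ) (hk : 3 ≤ k) (c : ℤ) (hc : c = -k ^ 2 - k + 1) :
    (fun z : ℚ => z ^ 2 + (c : ℚ))^[2] (k : ℚ) = -3 * (k : ℚ) + 2 ∧
    ∀ L : ℝ,
      Tendsto (fun n : ℕ =>
          ratHeight ((fun z : ℚ => z ^ 2 + (c : ℚ))^[n] (k : ℚ)) / (2 : ℝ) ^ n)
        atTop (nhds L) →
      L ≤ (1 / 4) * (Real.log (3 * (k : ℝ) - 2) + Real.log (3 / 2)) := by
  have hc11 : c ≤ -11 := by nlinarith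
  set g : ℤ → ℤ := fun z => z ^ 2 + c with hg
  have hfg : ∀ n : ℕ, (fun z : ℚ => z ^ 2 + (c : ℚ))^[n] (k : ℚ) = ((g^[n] k : ℤ) : ℚ) := by
    intro n
    induction n with
    | zero => simp
    | succ n ih =>
      rw [Function.iterate_succ_apply', Function.iterate_succ_apply', ih]
      simp only [hg]
      push_cast
      ring
  have hg2 : g^[2] k = -3 * k + 2 := by
    show g (g k) = _
    simp only [hg]
    subst hc
    ring
  have hkR : (3 : ℝ) ≤ (k : ℝ) := by exact_mod_cast hk
  set B : ℝ := 3 * (k : ℝ) - 2 with hB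
  set M : ℝ := (3 / 2) * B with hM
  have hB7 : (7 : ℝ) ≤ B := by simp only [hB]; linarith
  have hM1 : (1 : ℝ) ≤ M := by simp only [hM]; linarith
  set a : ℕ → ℤ := fun j => g^[j + 2] k with ha
  have ha0 : a 0 = -3 * k + 2 := hg2
  have hastep : ∀ j, a (j + 1) = (a j) ^ 2 + c := by
    intro j
    show g^[j + 1 + 2] k = _
    rw [show j + 1 + 2 = (j + 2) + 1 by ring, Function.iterate_succ_apply']
  have key : ∀ j : ℕ, -2 * c ≤ (a j) ^ 2 ∧ |((a j : ℤ) : ℝ)| ≤ (2 / 3) * M ^ (2 ^ j) := by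
    intro j
    induction j with
    | zero =>
      constructor
      · rw [ha0]; nlinarith
      · rw [ha0]
        have habs : |((-3 * k + 2 : ℤ) : ℝ)| = B := by
          push_cast
          rw [abs_of_nonpos (by linarith), hB]
          ring
        rw [habs, pow_zero, pow_one, hM]
        linarith
    | succ j ih =>
      obtain ⟨h1, h2⟩ := ih
      have hx0 : (0 : ℤ) ≤ (a j) ^ 2 + 2 * c := by linarith
      constructor
      · rw [hastep]
        have hmul : (0 : ℤ) ≤ (a j) ^ 2 * ((a j) ^ 2 + 2 * c) :=
          mul_nonneg (sq_nonneg _) hx0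
        nlinarith
      · rw [hastep]
        push_cast
        have h1R : (-2 : ℝ) * (c : ℝ) ≤ ((a j : ℝ)) ^ 2 := by exact_mod_cast h1
        have hcR : (c : ℝ) ≤ -11 := by exact_mod_cast hc11
        have hnn : (0 : ℝ) ≤ ((a j : ℝ)) ^ 2 + (c : ℝ) := by linarith
        have hsq : ((a j : ℝ)) ^ 2 ≤ ((2 / 3) * M ^ (2 ^ j)) ^ 2 := by
          rw [← sq_abs]
          exact pow_le_pow_left₀ (abs_nonneg _) h2 2
        have hMp : (0 : ℝ) ≤ M ^ (2 ^ j) := by positivity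
        rw [abs_of_nonneg hnn]
        have hstep : ((a j : ℝ)) ^ 2 + (c : ℝ) ≤ (3 / 2) * ((a j : ℝ)) ^ 2 := by linarith
        have hexp : M ^ (2 ^ (j + 1)) = (M ^ (2 ^ j)) ^ 2 := by
          rw [← pow_mul, pow_succ]
        calc ((a j : ℝ)) ^ 2 + (c : ℝ) ≤ (3 / 2) * ((a j : ℝ)) ^ 2 := hstep
          _ ≤ (3 / 2) * ((2 / 3) * M ^ (2 ^ j)) ^ 2 := by linarith
          _ = (2 / 3) * (M ^ (2 ^ j)) ^ 2 := by ring
          _ = (2 / 3) * M ^ (2 ^ (j + 1)) := by rw [hexp]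
  have part1 : (fun z : ℚ => z ^ 2 + (c : ℚ))^[2] (k : ℚ) = -3 * (k : ℚ) + 2 := by
    rw [hfg 2, hg2]; push_cast; ring
  refine ⟨part1, ?_⟩
  intro L hL
  have hbound : ∀ n : ℕ, 2 ≤ n →
      ratHeight ((fun z : ℚ => z ^ 2 + (c : ℚ))^[n] (k : ℚ)) / (2 : ℝ) ^ n ≤
        (1 / 4) * (Real.log (3 * (k : ℝ) - 2) + Real.log (3 / 2)) := by
    intro n hn
    obtain ⟨j, rfl⟩ := Nat.exists_eq_add_of_le hn
    have hval : (fun z : ℚ => z ^ 2 + (c : ℚ))^[2 + j] (k : ℚ) = ((a j : ℤ) : ℚ) := by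
      rw [hfg (2 + j), ha]
      norm_num [Nat.add_comm]
    rw [hval]
    have hH : ratHeight ((a j : ℤ) : ℚ) = Real.log (max |((a j : ℤ) : ℝ)| 1) := by
      unfold ratHeight
      rw [Rat.num_intCast, Rat.den_intCast]
      push_cast
      norm_num
    rw [hH]
    obtain ⟨_, h2⟩ := key j
    have hMp : (0 : ℝ) ≤ M ^ (2 ^ j) := by positivity
    have hone : (1 : ℝ) ≤ M ^ (2 ^ j) := by
      calc (1 : ℝ) = 1 ^ (2 ^ j) := (one_pow _).symm
        _ ≤ M ^ (2 ^ j) := pow_le_pow_left₀ zero_le_one hM1 _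
    have hmax : max |((a j : ℤ) : ℝ)| 1 ≤ M ^ (2 ^ j) := by
      apply max_le _ hone
      linarith
    have hlog : Real.log (max |((a j : ℤ) : ℝ)| 1) ≤ (2 ^ j : ℝ) * Real.log M := by
      calc Real.log (max |((a j : ℤ) : ℝ)| 1) ≤ Real.log (M ^ (2 ^ j)) := by
            apply Real.log_le_log (by positivity) hmax
        _ = (2 ^ j : ℝ) * Real.log M := by rw [Real.log_pow]; push_cast; ring
    have hlogM : Real.log M = Real.log (3 / 2) + Real.log B := by
      rw [hM, Real.log_mul (by norm_num) (by linarith)]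
    have hden : (0 : ℝ) < (2 : ℝ) ^ (2 + j) := by positivity
    have h2j : (0 : ℝ) < (2 : ℝ) ^ j := by positivity
    have hlogMnn : 0 ≤ Real.log M := Real.log_nonneg hM1
    calc Real.log (max |((a j : ℤ) : ℝ)| 1) / (2 : ℝ) ^ (2 + j)
        ≤ ((2 ^ j : ℝ) * Real.log M) / (2 : ℝ) ^ (2 + j) := by
          gcongr
      _ = Real.log M / 4 := by
          rw [show (2 : ℝ) ^ (2 + j) = (2 : ℝ) ^ j * 4 by rw [pow_add]; ring]
          exact mul_div_mul_left _ _ (ne_of_gt h2j)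
      _ = (1 / 4) * (Real.log (3 * (k : ℝ) - 2) + Real.log (3 / 2)) := by
          rw [hlogM, hB]; ring
  exact le_of_tendsto hL (eventually_atTop.2 ⟨2, hbound⟩)
end
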